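/- arXiv:1909.01403 — 7 statements merged into one kernel-verified Lean document; each statement's English description precedes it below -/
import Mathlib

section
/- Let $k \ge 1$ and let $\Pi$ be a $k$-path in a finite diagram $D \subseteq \mathbb{N}^2$. Then $\Pi$ is equivalent to an ordered $k$-path in $D$; that is, there exists an ordered $k$-path in $D$ with the same support as $\Pi$. -/
/-- `Prec A B` : for all `(a₁,b₁) ∈ A`, `(a₂,b₂) ∈ B` with `a₁ ≤ a₂`, `b₁ < b₂`. -/
def Prec (A B : Set (ℕ × ℕ)) : Prop :=
  ∀ p ∈ A, ∀ q ∈ B, p.1 ≤ q.1 → p.2 < q.2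

/-- A path in a diagram `D`: a nonempty sequence of nodes of `D`,
strictly increasing in row index and weakly increasing in column index. -/
def IsPath (D : Finset (ℕ × ℕ)) (π : List (ℕ × ℕ)) : Prop :=
  π ≠ [] ∧ (∀ p ∈ π, p ∈ D) ∧ π.Chain' (fun p q => p.1 < q.1 ∧ p.2 ≤ q.2)

/-- A `k`-path: a sequence of pairwise disjoint paths in `D`. -/
def IsKPath (D : Finset (ℕ × ℕ)) (P : List (List (ℕ × ℕ))) : Prop :=
  (∀ π ∈ P, IsPath D π) ∧ P.Pairwise (fun π ρ => ∀ p ∈ π, p ∉ ρ)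

/-- The support of a path, as a set of nodes. -/
def supp (π : List (ℕ × ℕ)) : Set (ℕ × ℕ) := {p | p ∈ π}

/-- An ordered `k`-path: the supports of the constituent paths are
successively related by `≺`. -/
def IsOrderedKPath (D : Finset (ℕ × ℕ)) (P : List (List (ℕ × ℕ))) : Prop :=
  IsKPath D P ∧ P.Pairwise (fun π ρ => Prec (supp π) (supp ρ))

/-!
Let `S` be the support of `Π`. The level of a node `p ∈ S` is the length of the longest chain
that starts at `p` and moves in `S` each time weakly down and strictly left. Nodes of equal level
form a path, and listing these level paths by increasing level gives an ordered multi-path with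
support `S`. The nodes of such a chain lie on pairwise distinct paths of `Π`, so there are at
most `k` levels. Since `|S| ≥ k`, repeatedly splitting off the last node of a path as a singleton
path, which keeps the multi-path ordered, brings the number of paths up to exactly `k`.
-/

section

variable {D S : Finset (ℕ × ℕ)} {π : List (ℕ × ℕ)} {P Q R : List (List (ℕ × ℕ))}

lemma IsPath.pairwise (h : IsPath D π) : π.Pairwise (fun p q => p.1 < q.1 ∧ p.2 ≤ q.2) :=
  (@List.isChain_iff_pairwise _ _ _
    ⟨fun hpq hqr => ⟨hpq.1.trans hqr.1, hpq.2.trans hqr.2⟩⟩).mp h.2.2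

lemma IsPath.nodup (h : IsPath D π) : π.Nodup :=
  h.pairwise.imp fun hpq hpq' => by subst hpq'; omega

lemma IsPath.snd_le_of_fst_le (h : IsPath D π) {p q : ℕ × ℕ} (hp : p ∈ π) (hq : q ∈ π)
    (hpq : p.1 ≤ q.1) : p.2 ≤ q.2 :=
  List.Pairwise.forall_of_forall_of_flip (R := fun p q : ℕ × ℕ => p.1 ≤ q.1 → p.2 ≤ q.2)
    (fun _ _ _ => le_rfl) (h.pairwise.imp fun h _ => h.2)
    (h.pairwise.imp fun h h' => absurd h' (by simp only [not_le]; exact h.1)) hp hq hpq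

lemma IsPath.dropLast (h : IsPath D π) (hπ : 2 ≤ π.length) : IsPath D π.dropLast :=
  ⟨List.ne_nil_of_length_pos (by rw [List.length_dropLast]; omega),
    fun p hp => h.2.1 p ((List.dropLast_sublist π).subset hp),
    (h.pairwise.sublist (List.dropLast_sublist π)).isChain⟩

lemma isOrderedKPath_iff :
    IsOrderedKPath D Q ↔
      (∀ π ∈ Q, IsPath D π) ∧ Q.Pairwise (fun π ρ => Prec (supp π) (supp ρ)) := by
  refine ⟨fun h => ⟨h.1.1, h.2⟩, fun h => ⟨⟨h.1, h.2.imp ?_⟩, h.2⟩⟩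
  exact fun hπρ p hpπ hpρ => lt_irrefl _ (hπρ p hpπ p hpρ le_rfl)

lemma isOrderedKPath_singleton : IsOrderedKPath D [π] ↔ IsPath D π := by
  simp [isOrderedKPath_iff]

lemma isOrderedKPath_append :
    IsOrderedKPath D (Q ++ R) ↔ IsOrderedKPath D Q ∧ IsOrderedKPath D R ∧
      ∀ π ∈ Q, ∀ ρ ∈ R, Prec (supp π) (supp ρ) := by
  simp only [isOrderedKPath_iff, List.pairwise_append, List.mem_append]
  grind

lemma IsKPath.nodup_flatten (hP : IsKPath D P) : P.flatten.Nodup :=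
  List.nodup_flatten.mpr ⟨fun π hπ => (hP.1 π hπ).nodup, hP.2⟩

lemma IsKPath.length_le_card (hP : IsKPath D P) : P.length ≤ P.flatten.toFinset.card := by
  rw [List.toFinset_card_of_nodup hP.nodup_flatten, List.length_flatten]
  simpa using List.card_nsmul_le_sum (P.map List.length) 1 (by
    simpa [Nat.one_le_iff_ne_zero] using fun π hπ => (hP.1 π hπ).1)

def level (S : Finset (ℕ × ℕ)) (p : ℕ × ℕ) : ℕ :=
  (S.filter fun q => p.1 ≤ q.1 ∧ q.2 < p.2).attach.sup fun q => level S q.1 + 1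
termination_by p.2
decreasing_by exact (Finset.mem_filter.mp q.2).2.2

lemma level_lt_level {p q : ℕ × ℕ} (hq : q ∈ S) (h₁ : p.1 ≤ q.1) (h₂ : q.2 < p.2) :
    level S q < level S p := by
  have hq' : q ∈ S.filter fun r => p.1 ≤ r.1 ∧ r.2 < p.2 := Finset.mem_filter.mpr ⟨hq, h₁, h₂⟩
  conv_rhs => rw [level]
  exact Finset.le_sup (f := fun r => level S r.1 + 1) (Finset.mem_attach _ ⟨q, hq'⟩)

lemma level_le_level {p q : ℕ × ℕ} (h₁ : p.1 ≤ q.1) (h₂ : q.2 ≤ p.2) :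
    level S q ≤ level S p := by
  rw [level, level]
  refine Finset.sup_le fun r _ => ?_
  obtain ⟨hr, hr₁, hr₂⟩ := Finset.mem_filter.mp r.2
  have hr' : r.1 ∈ S.filter fun s => p.1 ≤ s.1 ∧ s.2 < p.2 :=
    Finset.mem_filter.mpr ⟨hr, h₁.trans hr₁, by omega⟩
  exact Finset.le_sup (f := fun r => level S r.1 + 1) (Finset.mem_attach _ ⟨r.1, hr'⟩)

def southwestPaths (P : List (List (ℕ × ℕ))) (p : ℕ × ℕ) : Finset (List (ℕ × ℕ)) :=
  P.toFinset.filter fun π => ∃ r ∈ π, p.1 ≤ r.1 ∧ r.2 ≤ p.2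

lemma level_lt_card_southwestPaths (hP : ∀ π ∈ P, IsPath D π) (hS : ∀ q ∈ S, ∃ π ∈ P, q ∈ π)
    {p : ℕ × ℕ} (hp : p ∈ S) :
    level S p < (southwestPaths P p).card := by
  obtain ⟨π, hπP, hpπ⟩ := hS p hp
  have hπ : π ∈ southwestPaths P p :=
    Finset.mem_filter.mpr ⟨List.mem_toFinset.mpr hπP, p, hpπ, le_rfl, le_rfl⟩
  rw [level, Finset.sup_lt_iff (Finset.card_pos.mpr ⟨π, hπ⟩)]
  rintro ⟨q, hq⟩ -
  show level S q + 1 < _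
  obtain ⟨hqS, h₁, h₂⟩ := Finset.mem_filter.mp hq
  -- the path through `p` has no node weakly southwest of `q`
  have hsub : southwestPaths P q ⊂ southwestPaths P p := by
    have hmono : southwestPaths P q ⊆ southwestPaths P p := fun ρ hρ => by
      obtain ⟨hρP, r, hr, hr₁, hr₂⟩ := Finset.mem_filter.mp hρ
      exact Finset.mem_filter.mpr ⟨hρP, r, hr, h₁.trans hr₁, by omega⟩
    refine (Finset.ssubset_iff_of_subset hmono).mpr ⟨π, hπ, fun hπq => ?_⟩
    obtain ⟨r, hr, hr₁, hr₂⟩ := (Finset.mem_filter.mp hπq).2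
    have := (hP π hπP).snd_le_of_fst_le hpπ hr (h₁.trans hr₁)
    omega
  have := level_lt_card_southwestPaths hP hS hqS
  have := Finset.card_lt_card hsub
  omega
termination_by p.2
decreasing_by exact h₂

lemma level_lt_length (hP : ∀ π ∈ P, IsPath D π) (hS : ∀ q ∈ S, ∃ π ∈ P, q ∈ π)
    {p : ℕ × ℕ} (hp : p ∈ S) :
    level S p < P.length :=
  (level_lt_card_southwestPaths hP hS hp).trans_le
    ((Finset.card_filter_le _ _).trans (List.toFinset_card_le P))

noncomputable def levelClass (S : Finset (ℕ × ℕ)) (i : ℕ) : List (ℕ × ℕ) :=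
  (S.filter fun p => level S p = i).toList.mergeSort fun p q => decide (p.1 ≤ q.1)

lemma mem_levelClass {i : ℕ} {x : ℕ × ℕ} : x ∈ levelClass S i ↔ x ∈ S ∧ level S x = i := by
  rw [levelClass, (List.mergeSort_perm _ _).mem_iff, Finset.mem_toList, Finset.mem_filter]

lemma isPath_levelClass (hSD : S ⊆ D) {i : ℕ} (hne : levelClass S i ≠ []) :
    IsPath D (levelClass S i) := by
  refine ⟨hne, fun p hp => hSD (mem_levelClass.mp hp).1, List.Pairwise.isChain ?_⟩
  have hsorted : (levelClass S i).Pairwise fun p q => p.1 ≤ q.1 :=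
    (List.pairwise_mergeSort (by simp only [decide_eq_true_eq]; omega)
      (by simp only [Bool.or_eq_true, decide_eq_true_eq]; omega) _).imp (by simpa using ·)
  have hnodup : (levelClass S i).Nodup :=
    (List.mergeSort_perm _ _).nodup_iff.mpr (Finset.nodup_toList _)
  -- neither of two nodes of equal level lies weakly below and strictly left of the other
  refine (hsorted.and hnodup).imp_of_mem fun {a b} ha hb ⟨hab, hne⟩ => ?_
  obtain ⟨haS, hla⟩ := mem_levelClass.mp ha
  obtain ⟨hbS, hlb⟩ := mem_levelClass.mp hb
  have hcol : a.2 ≤ b.2 := by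
    by_contra! h
    exact absurd (level_lt_level hbS hab h) (by omega)
  refine ⟨lt_of_le_of_ne hab fun hrow => ?_, hcol⟩
  have hcol' : a.2 < b.2 := lt_of_le_of_ne hcol fun hcol' => hne (Prod.ext hrow hcol')
  exact absurd (level_lt_level haS hrow.ge hcol') (by omega)

lemma prec_levelClass {i j : ℕ} (hij : i < j) :
    Prec (supp (levelClass S i)) (supp (levelClass S j)) := by
  intro p hp q hq hpq
  by_contra! h
  have := level_le_level (S := S) hpq h
  rw [(mem_levelClass.mp hp).2, (mem_levelClass.mp hq).2] at this
  omega

noncomputable def levelPaths (S : Finset (ℕ × ℕ)) (n : ℕ) : List (List (ℕ × ℕ)) :=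
  ((List.range n).map (levelClass S)).filter (· ≠ [])

lemma length_levelPaths_le (n : ℕ) : (levelPaths S n).length ≤ n :=
  (List.length_filter_le _ _).trans (by simp)

lemma isOrderedKPath_levelPaths (hSD : S ⊆ D) (n : ℕ) :
    IsOrderedKPath D (levelPaths S n) := by
  refine isOrderedKPath_iff.mpr ⟨fun π hπ => ?_, ?_⟩
  · obtain ⟨hπ, hne⟩ := List.mem_filter.mp hπ
    obtain ⟨i, -, rfl⟩ := List.mem_map.mp hπ
    exact isPath_levelClass hSD (by simpa using hne)
  · exact (List.pairwise_map (R := fun π ρ => Prec (supp π) (supp ρ))).mpr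
      (List.pairwise_lt_range.imp prec_levelClass) |>.filter _

lemma mem_flatten_levelPaths {n : ℕ} (hn : ∀ p ∈ S, level S p < n) {x : ℕ × ℕ} :
    x ∈ (levelPaths S n).flatten ↔ x ∈ S := by
  simp only [levelPaths, List.mem_flatten, List.mem_filter, List.mem_map, List.mem_range]
  constructor
  · rintro ⟨_, ⟨⟨i, -, rfl⟩, -⟩, hx⟩
    exact (mem_levelClass.mp hx).1
  · intro hx
    have hx' : x ∈ levelClass S (level S x) := mem_levelClass.mpr ⟨hx, rfl⟩
    exact ⟨_, ⟨⟨_, hn x hx, rfl⟩, by simpa using List.ne_nil_of_mem hx'⟩, hx'⟩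

lemma IsPath.exists_split (hπ : IsPath D π) {m : ℕ} (hm : 1 ≤ m) (hmπ : m ≤ π.length) :
    ∃ R : List (List (ℕ × ℕ)), IsOrderedKPath D R ∧ R.length = m ∧ R.flatten.Perm π := by
  induction m, hm using Nat.le_induction generalizing π with
  | base => exact ⟨[π], isOrderedKPath_singleton.mpr hπ, rfl, by simp⟩
  | succ m hm IH =>
    have hne := hπ.1
    set p := π.getLast hne
    have hsplit : π.dropLast ++ [p] = π := List.dropLast_append_getLast hne
    have hrow : ∀ q ∈ π.dropLast, q.1 < p.1 := fun q hq =>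
      (List.pairwise_append.mp (hsplit ▸ hπ.pairwise)).2.2 q hq p (List.mem_singleton_self p) |>.1
    obtain ⟨R, hR, hRm, hRπ⟩ := IH (hπ.dropLast (by omega)) (by rw [List.length_dropLast]; omega)
    have hp : IsPath D [p] :=
      ⟨List.cons_ne_nil _ _, by simpa using hπ.2.1 p (List.getLast_mem hne),
        List.isChain_singleton p⟩
    -- the last node lies strictly below every other node, so `{p} ≺ ρ` holds vacuously
    have hpR : ∀ σ ∈ [[p]], ∀ ρ ∈ R, Prec (supp σ) (supp ρ) := by
      intro σ hσ ρ hρ x hx q hq hxq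
      obtain rfl : x = p := by simpa [List.mem_singleton.mp hσ, supp] using hx
      have := hrow q (hRπ.subset (List.mem_flatten.mpr ⟨ρ, hρ, hq⟩))
      omega
    refine ⟨[p] :: R, isOrderedKPath_append.mpr ⟨isOrderedKPath_singleton.mpr hp, hR, hpR⟩,
      by simp [hRm], ?_⟩
    rw [← hsplit]
    exact (hRπ.cons p).trans (List.perm_append_singleton p _).symm

lemma IsOrderedKPath.exists_split (hQ : IsOrderedKPath D Q) {k : ℕ} (hk : Q.length ≤ k)
    (hkQ : k ≤ Q.flatten.length) :
    ∃ R : List (List (ℕ × ℕ)), IsOrderedKPath D R ∧ R.length = k ∧ R.flatten.Perm Q.flatten := by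
  induction Q generalizing k with
  | nil => exact ⟨[], hQ, (Nat.le_zero.mp hkQ).symm, List.Perm.refl _⟩
  | cons π T IH =>
    rw [← List.singleton_append, isOrderedKPath_append, isOrderedKPath_singleton] at hQ
    obtain ⟨hπ, hT, hπT⟩ := hQ
    have hπlen := List.length_pos_iff.mpr hπ.1
    have hTlen := hT.1.length_le_card.trans (List.toFinset_card_le _)
    simp only [List.length_cons, List.flatten_cons, List.length_append] at hk hkQ
    set m := min π.length (k - T.length) with hm
    obtain ⟨R, hR, hRm, hRπ⟩ := hπ.exists_split (m := m) (by omega) (min_le_left _ _)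
    obtain ⟨T', hT', hT'k, hT'T⟩ := IH hT (k := k - m) (by omega) (by omega)
    have hRT' : ∀ ρ ∈ R, ∀ τ ∈ T', Prec (supp ρ) (supp τ) := by
      intro ρ hρ τ hτ x hx q hq
      obtain ⟨σ, hσ, hqσ⟩ :=
        List.mem_flatten.mp (hT'T.subset (List.mem_flatten.mpr ⟨τ, hτ, hq⟩))
      exact hπT π (List.mem_singleton_self π) σ hσ x
        (hRπ.subset (List.mem_flatten.mpr ⟨ρ, hρ, hx⟩)) q hqσ
    refine ⟨R ++ T', isOrderedKPath_append.mpr ⟨hR, hT', hRT'⟩, ?_, ?_⟩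
    · simp only [List.length_append, hRm, hT'k]
      omega
    · simpa using hRπ.append hT'T

end

theorem stmt_8_general (D : Finset (ℕ × ℕ)) (k : ℕ)
    (P : List (List (ℕ × ℕ))) (hP : IsKPath D P) (hlen : P.length = k) :
    ∃ Q : List (List (ℕ × ℕ)), IsOrderedKPath D Q ∧ Q.length = k ∧
      Q.flatten.toFinset = P.flatten.toFinset := by
  set S := P.flatten.toFinset
  have hSP : ∀ q ∈ S, ∃ π ∈ P, q ∈ π := fun q hq => List.mem_flatten.mp (List.mem_toFinset.mp hq)
  have hSD : S ⊆ D := fun q hq =>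
    let ⟨π, hπ, hqπ⟩ := hSP q hq
    (hP.1 π hπ).2.1 q hqπ
  have hmem : ∀ x, x ∈ (levelPaths S k).flatten ↔ x ∈ S := fun x =>
    mem_flatten_levelPaths fun p hp => hlen ▸ level_lt_length hP.1 hSP hp
  have hcard : k ≤ (levelPaths S k).flatten.length := calc
    k ≤ S.card := hlen ▸ hP.length_le_card
    _ = (levelPaths S k).flatten.toFinset.card := by congr 1; ext x; simp [hmem]
    _ ≤ (levelPaths S k).flatten.length := List.toFinset_card_le _
  obtain ⟨Q, hQ, hQk, hQperm⟩ :=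
    (isOrderedKPath_levelPaths hSD k).exists_split (length_levelPaths_le k) hcard
  refine ⟨Q, hQ, hQk, ?_⟩
  ext x
  simp [hQperm.mem_iff, hmem]

/-- Theorem 2.14: every `k`-path (`k ≥ 1`) in a diagram `D` is equivalent to an
ordered `k`-path in `D` (same support). -/
theorem stmt_8 (D : Finset (ℕ × ℕ)) (hD : D.Nonempty) (k : ℕ) (hk : 1 ≤ k)
    (P : List (List (ℕ × ℕ))) (hP : IsKPath D P) (hlen : P.length = k) :
    ∃ Q : List (List (ℕ × ℕ)), IsOrderedKPath D Q ∧ Q.length = k ∧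
      Q.flatten.toFinset = P.flatten.toFinset :=
  stmt_8_general D k P hP hlen
end

section
/- Let $\Pi = (\pi_1, \ldots, \pi_k)$ be an ordered $k$-path in a diagram $D$ and let $(a',b')$ be a node of $D$ not in the support of $\Pi$. If some constituent path $\pi_j$ contains two nodes $(a_1, b')$ and $(a_2, b')$ with $a_1 < a' < a_2$, then replacing $\pi_j$ by the path with support $s(\pi_j) \cup \{(a',b')\}$ yields again an ordered $k$-path. -/
/-! The new node `(a', b')` lies in column `b'` strictly between two nodes of `π_j` in that
column, so by monotonicity `π_j` has no node in row `a'`, and `(a', b')` can be inserted at its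
row position to give a path. Any node comparable with `(a', b')` in another constituent path is
also comparable, in the same direction, with `(a₁, b')` or `(a₂, b')`, so the order `≺` survives;
disjointness survives because `(a', b')` lies in no constituent path. -/

theorem List.Pairwise.set_of_imp {α : Type*} {R : α → α → Prop} {l : List α} (hl : l.Pairwise R)
    {j : ℕ} (hj : j < l.length) {y : α} (hleft : ∀ a ∈ l, R a l[j] → R a y)
    (hright : ∀ b ∈ l, R l[j] b → R y b) : (l.set j y).Pairwise R := by
  rw [List.pairwise_iff_getElem] at hl ⊢
  intro i k hi hk hik
  simp only [List.length_set] at hi hk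
  simp only [List.getElem_set]
  split_ifs with hji hjk hjk
  · omega
  · subst hji; exact hright _ (List.getElem_mem _) (hl _ _ hj hk hik)
  · subst hjk; exact hleft _ (List.getElem_mem _) (hl _ _ hi hj hik)
  · exact hl _ _ hi hk hik

theorem Prec.insert_left {A B : Set (ℕ × ℕ)} (h : Prec A B) {a₁ a b : ℕ} (ha₁ : (a₁, b) ∈ A)
    (hlt : a₁ < a) : Prec (insert (a, b) A) B := by
  rintro p (rfl | hp) q hq hle
  · exact h _ ha₁ q hq (hlt.le.trans hle)
  · exact h p hp q hq hle

theorem Prec.insert_right {A B : Set (ℕ × ℕ)} (h : Prec A B) {a₂ a b : ℕ} (ha₂ : (a₂, b) ∈ B)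
    (hlt : a < a₂) : Prec A (insert (a, b) B) := by
  rintro p hp q (rfl | hq) hle
  · exact h p hp (a₂, b) ha₂ (hle.trans hlt.le)
  · exact h p hp q hq hle

def PathStep (p q : ℕ × ℕ) : Prop := p.1 < q.1 ∧ p.2 ≤ q.2

instance : Trans PathStep PathStep PathStep :=
  ⟨fun h₁ h₂ => ⟨h₁.1.trans h₂.1, h₁.2.trans h₂.2⟩⟩

namespace IsPath

variable {D : Finset (ℕ × ℕ)} {π : List (ℕ × ℕ)}

theorem pairwise_s9 (hπ : IsPath D π) : π.Pairwise PathStep :=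
  List.isChain_iff_pairwise.mp hπ.2.2

theorem snd_le_snd (hπ : IsPath D π) {p q : ℕ × ℕ} (hp : p ∈ π) (hq : q ∈ π) (hlt : p.1 < q.1) :
    p.2 ≤ q.2 := by
  have : Std.Symm fun p q => PathStep p q ∨ PathStep q p := ⟨fun _ _ => Or.symm⟩
  have hpw : π.Pairwise fun p q => PathStep p q ∨ PathStep q p := hπ.pairwise_s9.imp Or.inl
  rcases hpw.forall hp hq (ne_of_apply_ne Prod.fst hlt.ne) with h | h
  · exact h.2
  · exact absurd h.1 (lt_asymm hlt)

theorem snd_eq_of_fst_mem_Ioo (hπ : IsPath D π) {a₁ a₂ b : ℕ} (ha₁ : (a₁, b) ∈ π)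
    (ha₂ : (a₂, b) ∈ π) {x : ℕ × ℕ} (hx : x ∈ π) (h₁ : a₁ < x.1) (h₂ : x.1 < a₂) : x.2 = b :=
  le_antisymm (hπ.snd_le_snd hx ha₂ h₂) (hπ.snd_le_snd ha₁ hx h₁)

end IsPath

/-- `π` with the node `x` placed at its row position; nodes of `π` in row `x.1` are dropped. -/
def insertNode (π : List (ℕ × ℕ)) (x : ℕ × ℕ) : List (ℕ × ℕ) :=
  π.filter (·.1 < x.1) ++ x :: π.filter (x.1 < ·.1)

theorem mem_insertNode {π : List (ℕ × ℕ)} {x y : ℕ × ℕ} :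
    y ∈ insertNode π x ↔ y ∈ π ∧ y.1 ≠ x.1 ∨ y = x := by
  simp only [insertNode, List.mem_append, List.mem_cons, List.mem_filter, decide_eq_true_iff]
  constructor
  · rintro (⟨hy, h⟩ | rfl | ⟨hy, h⟩)
    · exact Or.inl ⟨hy, h.ne⟩
    · exact Or.inr rfl
    · exact Or.inl ⟨hy, h.ne'⟩
  · rintro (⟨hy, h⟩ | rfl)
    · rcases h.lt_or_gt with h | h
      exacts [Or.inl ⟨hy, h⟩, Or.inr (Or.inr ⟨hy, h⟩)]
    · exact Or.inr (Or.inl rfl)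

theorem isPath_insertNode {D : Finset (ℕ × ℕ)} {π : List (ℕ × ℕ)} (hπ : IsPath D π)
    {a₁ a₂ a b : ℕ} (hx : (a, b) ∈ D) (ha₁ : (a₁, b) ∈ π) (ha₂ : (a₂, b) ∈ π) (h₁ : a₁ < a)
    (h₂ : a < a₂) : IsPath D (insertNode π (a, b)) := by
  refine ⟨by simp [insertNode], fun y hy => ?_, (List.isChain_iff_pairwise (R := PathStep)).mpr ?_⟩
  · rcases mem_insertNode.mp hy with ⟨hy, -⟩ | rfl
    exacts [hπ.2.1 y hy, hx]
  have hpw := hπ.pairwise_s9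
  simp only [insertNode, List.pairwise_append, List.pairwise_cons, List.mem_cons, List.mem_filter,
    decide_eq_true_iff]
  refine ⟨hpw.filter _, ⟨fun q hq => ?_, hpw.filter _⟩, ?_⟩
  · exact ⟨hq.2, hπ.snd_le_snd (p := (a₁, b)) ha₁ hq.1 (h₁.trans hq.2)⟩
  rintro p ⟨hp, hpa⟩ q (rfl | ⟨hq, hqa⟩)
  · exact ⟨hpa, hπ.snd_le_snd hp (q := (a₂, b)) ha₂ (hpa.trans h₂)⟩
  · exact ⟨hpa.trans hqa, hπ.snd_le_snd hp hq (hpa.trans hqa)⟩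

/-- Lemma 3.3(i): if `(a',b')` is a node of `D` outside the support of the ordered
`k`-path `P`, and some constituent path `P.get j` contains nodes `(a₁,b')`,
`(a₂,b')` with `a₁ < a' < a₂`, then replacing that path by the path whose support
is `s(π_j) ∪ {(a',b')}` again yields an ordered `k`-path. -/
theorem stmt_9 (D : Finset (ℕ × ℕ)) (P : List (List (ℕ × ℕ)))
    (hP : IsOrderedKPath D P)
    (a' b' : ℕ) (hmem : (a', b') ∈ D) (hnot : (a', b') ∉ P.flatten)
    (j : ℕ) (hj : j < P.length)
    (h2 : ∃ a₁ a₂ : ℕ, (a₁, b') ∈ P.get ⟨j, hj⟩ ∧ (a₂, b') ∈ P.get ⟨j, hj⟩ ∧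
      a₁ < a' ∧ a' < a₂) :
    ∃ π' : List (ℕ × ℕ), IsPath D π' ∧
      π'.toFinset = (P.get ⟨j, hj⟩).toFinset ∪ {(a', b')} ∧
      IsOrderedKPath D (P.set j π') := by
  obtain ⟨a₁, a₂, ha₁, ha₂, h₁, h₂⟩ := h2
  obtain ⟨⟨hpaths, hdisj⟩, hprec⟩ := hP
  have hfresh : ∀ ρ ∈ P, (a', b') ∉ ρ := fun ρ hρ h => hnot (List.mem_flatten.mpr ⟨ρ, hρ, h⟩)
  set π := P.get ⟨j, hj⟩
  have hπ : IsPath D π := hpaths π (List.get_mem _ _)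
  have hrow : ∀ x ∈ π, x.1 ≠ a' := by
    rintro ⟨a, b⟩ hx (rfl : a = a')
    obtain rfl : b = b' := hπ.snd_eq_of_fst_mem_Ioo ha₁ ha₂ hx h₁ h₂
    exact hfresh π (List.get_mem _ _) hx
  have hmem_insert : ∀ x, x ∈ insertNode π (a', b') ↔ x = (a', b') ∨ x ∈ π := fun x => by
    rw [mem_insertNode, or_comm]
    exact or_congr_right ⟨And.left, fun hx => ⟨hx, hrow x hx⟩⟩
  have hsupp : supp (insertNode π (a', b')) = insert (a', b') (supp π) := Set.ext hmem_insert
  refine ⟨insertNode π (a', b'), isPath_insertNode hπ hmem ha₁ ha₂ h₁ h₂, ?_, ⟨?_, ?_⟩, ?_⟩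
  · ext x
    simp [hmem_insert, or_comm]
  · intro ρ hρ
    rcases List.mem_or_eq_of_mem_set hρ with hρ | rfl
    exacts [hpaths ρ hρ, isPath_insertNode hπ hmem ha₁ ha₂ h₁ h₂]
  · refine hdisj.set_of_imp hj (fun ρ hρ h x hx hx' => ?_) (fun ρ hρ h x hx => ?_)
    · rcases (hmem_insert x).mp hx' with rfl | hx'
      exacts [hfresh ρ hρ hx, h x hx hx']
    · rcases (hmem_insert x).mp hx with rfl | hx
      exacts [hfresh ρ hρ, h x hx]
  · refine hprec.set_of_imp hj (fun ρ _ h => ?_) (fun ρ _ h => ?_) <;> rw [hsupp]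
    exacts [h.insert_right ha₂ h₂, h.insert_left ha₁ h₁]
end

section
/- Let $\Pi = (\pi_1, \ldots, \pi_k)$ be an ordered $k$-path in a diagram $D$ and let $(a',b')$ be a node of $D$ not in the support of $\Pi$. If no constituent path $\pi_j$ contains two nodes $(a_1, b')$ and $(a_2, b')$ with $a_1 < a' < a_2$, then the length-one path $\pi'$ with support $\{(a',b')\}$ can be inserted at some position into $\Pi$ so that the resulting $(k+1)$-path $(\pi_1, \ldots, \pi_{k'}, \pi', \pi_{k'+1}, \ldots, \pi_k)$ is ordered. -/
/-!
Every path `π` of `P` lies entirely on one side of the node `x = (a', b')`: either `π ≺ {x}`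
or `{x} ≺ π`. Indeed, if some node `p ∈ π` has `p.1 ≤ a'` and `b' ≤ p.2`, then every node `q ∈ π`
with `a' ≤ q.1` lies weakly right of `p`, so `b' ≤ q.2`, and `q.2 = b'` would make `p` and `q`
a pair straddling `x` in column `b'`. Moreover, once a path `ρ` fails `ρ ≺ {x}`, every later path
`π` (which satisfies `ρ ≺ π`) has `{x} ≺ π`. Hence `[x]` can be inserted right after the
maximal initial segment of paths preceding `x`.
-/

theorem List.mem_take_append_cons_drop {α : Type*} {l : List α} {k : ℕ} {x b : α} :
    b ∈ l.take k ++ x :: l.drop k ↔ b = x ∨ b ∈ l := by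
  rw [List.perm_middle.mem_iff, List.mem_cons, List.take_append_drop]

theorem List.exists_pairwise_take_append_cons_drop {α : Type*} {R : α → α → Prop} (x : α) :
    ∀ {l : List α}, l.Pairwise R → (∀ a ∈ l, ¬ R a x → R x a) →
      (∀ a ∈ l, ∀ b ∈ l, R a b → ¬ R a x → R x b) →
      ∃ k ≤ l.length, (l.take k ++ x :: l.drop k).Pairwise R
  | [], _, _, _ => ⟨0, le_rfl, by simp⟩
  | a :: l, hl, hsplit, hprop => by
    rw [List.pairwise_cons] at hl
    by_cases hax : R a x
    · obtain ⟨k, hk, hkl⟩ := List.exists_pairwise_take_append_cons_drop x hl.2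
        (fun b hb => hsplit b (List.mem_cons_of_mem a hb))
        (fun b hb c hc => hprop b (List.mem_cons_of_mem a hb) c (List.mem_cons_of_mem a hc))
      refine ⟨k + 1, by simpa using hk, ?_⟩
      rw [List.take_succ_cons, List.drop_succ_cons, List.cons_append, List.pairwise_cons]
      refine ⟨fun b hb => ?_, hkl⟩
      rcases List.mem_take_append_cons_drop.mp hb with rfl | hb
      · exact hax
      · exact hl.1 b hb
    · refine ⟨0, Nat.zero_le _, ?_⟩
      rw [List.take_zero, List.drop_zero, List.nil_append, List.pairwise_cons]
      refine ⟨fun b hb => ?_, List.pairwise_cons.mpr hl⟩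
      rcases List.mem_cons.mp hb with rfl | hb
      · exact hsplit b List.mem_cons_self hax
      · exact hprop a List.mem_cons_self b (List.mem_cons_of_mem a hb) (hl.1 b hb) hax

theorem prec_singleton_of_not_prec_singleton {A B : Set (ℕ × ℕ)} {x : ℕ × ℕ}
    (hAx : ¬ Prec A {x}) (hAB : Prec A B) : Prec {x} B := by
  intro p hp q hq hpq
  rw [Set.mem_singleton_iff] at hp
  subst hp
  obtain ⟨r, hr, hrx⟩ : ∃ r ∈ A, r.1 ≤ p.1 ∧ p.2 ≤ r.2 := by
    simpa [Prec] using hAx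
  exact hrx.2.trans_lt (hAB r hr q hq (hrx.1.trans hpq))

theorem col_le_col_of_row_le {π : List (ℕ × ℕ)}
    (hπ : π.IsChain (fun p q => p.1 < q.1 ∧ p.2 ≤ q.2)) {p q : ℕ × ℕ}
    (hp : p ∈ π) (hq : q ∈ π) (hpq : p.1 ≤ q.1) : p.2 ≤ q.2 := by
  let S : ℕ × ℕ → ℕ × ℕ → Prop := fun p q => (p.1 ≤ q.1 → p.2 ≤ q.2) ∧ (q.1 ≤ p.1 → q.2 ≤ p.2)
  have : Std.Symm S := ⟨fun _ _ h => ⟨h.2, h.1⟩⟩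
  have : Trans (fun p q : ℕ × ℕ => p.1 < q.1 ∧ p.2 ≤ q.2)
      (fun p q : ℕ × ℕ => p.1 < q.1 ∧ p.2 ≤ q.2) (fun p q : ℕ × ℕ => p.1 < q.1 ∧ p.2 ≤ q.2) :=
    ⟨fun h h' => ⟨h.1.trans h'.1, h.2.trans h'.2⟩⟩
  have hS : π.Pairwise S :=
    (List.isChain_iff_pairwise.mp hπ).imp fun h => ⟨fun _ => h.2, fun h' => absurd h' h.1.not_ge⟩
  rcases eq_or_ne p q with rfl | hne
  · exact le_rfl
  · exact (hS.forall hp hq hne).1 hpq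

theorem supp_prec_singleton_or_singleton_prec_supp {π : List (ℕ × ℕ)}
    (hπ : π.IsChain (fun p q => p.1 < q.1 ∧ p.2 ≤ q.2)) {a' b' : ℕ} (hx : (a', b') ∉ π)
    (hstraddle : ¬ ∃ a₁ a₂ : ℕ, (a₁, b') ∈ π ∧ (a₂, b') ∈ π ∧ a₁ < a' ∧ a' < a₂) :
    Prec (supp π) {(a', b')} ∨ Prec {(a', b')} (supp π) := by
  refine or_iff_not_imp_left.mpr fun hπx => ?_
  obtain ⟨⟨a₁, c₁⟩, hp, ha₁, hc₁⟩ : ∃ p ∈ π, p.1 ≤ a' ∧ b' ≤ p.2 := by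
    simpa [Prec, supp] using hπx
  rintro _ rfl ⟨a₂, c₂⟩ hq (ha₂ : a' ≤ a₂)
  have hc : c₁ ≤ c₂ := col_le_col_of_row_le hπ hp hq (ha₁.trans ha₂)
  refine lt_of_le_of_ne (hc₁.trans hc) fun hc₂ => ?_
  subst hc₂
  obtain rfl : c₁ = b' := le_antisymm hc hc₁
  refine hstraddle ⟨a₁, a₂, hp, hq, ha₁.lt_of_ne ?_, ha₂.lt_of_ne ?_⟩ <;> rintro rfl <;> contradiction

/-- Lemma 3.3(ii): if `(a',b')` is a node of `D` outside the support of the ordered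
`k`-path `P`, and no constituent path contains nodes `(a₁,b')`, `(a₂,b')` with
`a₁ < a' < a₂`, then the length-one path `[(a',b')]` may be inserted at some
position `k'` of `P` so that the resulting `(k+1)`-path is ordered. -/
theorem stmt_10 (D : Finset (ℕ × ℕ)) (P : List (List (ℕ × ℕ)))
    (hP : IsOrderedKPath D P)
    (a' b' : ℕ) (hmem : (a', b') ∈ D) (hnot : (a', b') ∉ P.flatten)
    (h2 : ∀ π ∈ P, ¬ ∃ a₁ a₂ : ℕ, (a₁, b') ∈ π ∧ (a₂, b') ∈ π ∧ a₁ < a' ∧ a' < a₂) :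
    ∃ k' ≤ P.length,
      IsOrderedKPath D (P.take k' ++ [(a', b')] :: P.drop k') := by
  obtain ⟨⟨hpaths, hdisj⟩, hord⟩ := hP
  set R : List (ℕ × ℕ) → List (ℕ × ℕ) → Prop :=
    fun π ρ => (∀ p ∈ π, p ∉ ρ) ∧ Prec (supp π) (supp ρ)
  have hxP : ∀ π ∈ P, (a', b') ∉ π := fun π hπ hx => hnot (List.mem_flatten.mpr ⟨π, hπ, hx⟩)
  have hsupp : supp [(a', b')] = {(a', b')} := by ext; simp [supp]
  have hR_left (π) (hπ : π ∈ P) : R π [(a', b')] ↔ Prec (supp π) {(a', b')} := by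
    rw [← hsupp]
    exact and_iff_right fun p hp hpx => hxP π hπ (List.mem_singleton.mp hpx ▸ hp)
  have hR_right (π) (hπ : π ∈ P) : R [(a', b')] π ↔ Prec {(a', b')} (supp π) := by
    rw [← hsupp]
    exact and_iff_right fun p hpx => List.mem_singleton.mp hpx ▸ hxP π hπ
  have hsplit : ∀ π ∈ P, ¬ R π [(a', b')] → R [(a', b')] π := fun π hπ hπx =>
    (hR_right π hπ).2 <| (supp_prec_singleton_or_singleton_prec_supp (hpaths π hπ).2.2
      (hxP π hπ) (h2 π hπ)).resolve_left (mt (hR_left π hπ).2 hπx)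
  have hprop : ∀ π ∈ P, ∀ ρ ∈ P, R π ρ → ¬ R π [(a', b')] → R [(a', b')] ρ :=
    fun π hπ ρ hρ hπρ hπx => (hR_right ρ hρ).2 <|
      prec_singleton_of_not_prec_singleton (mt (hR_left π hπ).2 hπx) hπρ.2
  obtain ⟨k, hk, hkP⟩ :=
    List.exists_pairwise_take_append_cons_drop [(a', b')] (hdisj.and hord) hsplit hprop
  refine ⟨k, hk, ⟨fun π hπ => ?_, hkP.imp And.left⟩, hkP.imp And.right⟩
  rcases List.mem_take_append_cons_drop.mp hπ with rfl | hπ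
  · exact ⟨List.cons_ne_nil _ _, by simpa using hmem, List.isChain_singleton _⟩
  · exact hpaths π hπ
end

section
/- Let $D \subseteq \mathbb{N}^2$ be a diagram of size $n$ and let $u \in S_n$ be such that filling $D$ row-by-row with $1,\ldots,n$ and then applying $u$ to the entries produces a standard $D$-tableau. If $\ell(u s_k) = \ell(u) - 1$ for some adjacent transposition $s_k = (k, k+1)$, then in this tableau the entry $k+1$ lies strictly north-east of the entry $k$ (strictly smaller row index and strictly larger column index), and the tableau obtained by swapping $k$ and $k+1$ is again standard. -/
/-- The number of inversions of a permutation of `Fin n`; this equals the Coxeter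
length of the permutation with respect to the adjacent transpositions. -/
def invCount (n : ℕ) (u : Equiv.Perm (Fin n)) : ℕ :=
  (Finset.univ.filter (fun p : Fin n × Fin n => p.1 < p.2 ∧ u p.2 < u p.1)).card

/-!
Swapping the entries `k`, `k+1` of `t^D u` adds one inversion when `k` is read before `k+1`
in the row reading order of `D`. So `ℓ(u s_k) < ℓ(u)` forces `k+1` to be read first, i.e. to lie
in an earlier row or further west in the same row; standardness rules out every position but
strictly north-east. Then `k` and `k+1` are incomparable cells, so exchanging them keeps the
tableau standard, since it changes no other relative order of entries.
-/

theorem Equiv.swap_apply_lt_swap_apply_iff_of_covBy {α : Type*} [LinearOrder α] [DecidableEq α]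
    {a b : α} (hab : a ⋖ b) (x y : α) :
    swap a b x < swap a b y ↔ (x < y ∧ ¬(x = a ∧ y = b)) ∨ (x = b ∧ y = a) := by
  have hle_a : ∀ c, c < b → c ≤ a := fun c hc => not_lt.mp fun h => hab.2 h hc
  have hge_b : ∀ c, a < c → b ≤ c := fun c hc => not_lt.mp fun h => hab.2 hc h
  have hlt := hab.1
  rw [swap_apply_def, swap_apply_def]
  split_ifs <;> subst_vars <;> grind

theorem invCount_swap_mul_of_symm_lt {n : ℕ} {a b : Fin n} (hab : a ⋖ b)
    (u : Equiv.Perm (Fin n)) (h : u.symm a < u.symm b) :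
    invCount n (Equiv.swap a b * u) = invCount n u + 1 := by
  have hnew : (Finset.univ.filter fun p : Fin n × Fin n =>
        p.1 < p.2 ∧ (Equiv.swap a b * u) p.2 < (Equiv.swap a b * u) p.1) =
      insert (u.symm a, u.symm b) (Finset.univ.filter fun p : Fin n × Fin n =>
        p.1 < p.2 ∧ u p.2 < u p.1) := by
    ext ⟨p, q⟩
    simp only [Finset.mem_filter, Finset.mem_insert, Finset.mem_univ, true_and, Prod.mk.injEq,
      Equiv.Perm.mul_apply, Equiv.swap_apply_lt_swap_apply_iff_of_covBy hab, ← Equiv.eq_symm_apply]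
    grind
  have hold : (u.symm a, u.symm b) ∉ Finset.univ.filter fun p : Fin n × Fin n =>
      p.1 < p.2 ∧ u p.2 < u p.1 := by
    simp [hab.1.le]
  rw [invCount, invCount, hnew, Finset.card_insert_of_notMem hold]

theorem symm_lt_symm_of_invCount_swap_mul_lt {n : ℕ} {a b : Fin n} (hab : a ⋖ b)
    {u : Equiv.Perm (Fin n)} (h : invCount n (Equiv.swap a b * u) < invCount n u) :
    u.symm b < u.symm a := by
  refine lt_of_le_of_ne (not_lt.mp fun hlt => ?_) (u.symm.injective.ne hab.1.ne')
  rw [invCount_swap_mul_of_symm_lt hab u hlt] at h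
  omega

def IsStandardTableau {D : Finset (ℕ × ℕ)} {α : Type*} [Preorder α] (T : D → α) : Prop :=
  ∀ p q : D, p.1.1 ≤ q.1.1 → p.1.2 ≤ q.1.2 → T p ≤ T q

namespace IsStandardTableau

variable {D : Finset (ℕ × ℕ)} {α : Type*} [LinearOrder α] {T : D → α}

theorem northEast_of_lt_of_readBefore (hT : IsStandardTableau T) {p q : D} (hpq : T p < T q)
    (hread : q.1.1 < p.1.1 ∨ (q.1.1 = p.1.1 ∧ q.1.2 < p.1.2)) :
    q.1.1 < p.1.1 ∧ p.1.2 < q.1.2 := by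
  have hcol : p.1.2 < q.1.2 := not_le.mp fun h =>
    (hT q p (hread.elim le_of_lt fun h => h.1.le) h).not_gt hpq
  exact ⟨hread.resolve_right fun h => h.2.not_gt hcol, hcol⟩

theorem swap_comp [DecidableEq α] (hT : IsStandardTableau T) {a b : α} (hab : a ⋖ b)
    (hsouth : ∀ p q, T p = a → T q = b → q.1.1 < p.1.1) :
    IsStandardTableau (Equiv.swap a b ∘ T) := by
  intro p q hrow hcol
  refine not_lt.mp fun hlt => ?_
  rcases (Equiv.swap_apply_lt_swap_apply_iff_of_covBy hab _ _).mp hlt with ⟨hlt, -⟩ | ⟨hq, hp⟩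
  · exact (hT p q hrow hcol).not_gt hlt
  · exact (hsouth p q hp hq).not_ge hrow

end IsStandardTableau

theorem stmt_11_general (n : ℕ) (D : Finset (ℕ × ℕ))
    (tRow : {x // x ∈ D} ≃ Fin n)
    (hRow : ∀ p q : {x // x ∈ D},
      tRow p < tRow q ↔ (p.1.1 < q.1.1 ∨ (p.1.1 = q.1.1 ∧ p.1.2 < q.1.2)))
    (u : Equiv.Perm (Fin n))
    (hstd : ∀ p q : {x // x ∈ D},
      p.1.1 ≤ q.1.1 → p.1.2 ≤ q.1.2 → u (tRow p) ≤ u (tRow q))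
    (k : ℕ) (hk : k + 1 < n)
    (hlen : invCount n
        (Equiv.swap (⟨k, Nat.lt_of_succ_lt hk⟩ : Fin n) ⟨k + 1, hk⟩ * u) + 1 =
      invCount n u) :
    (∃ p q : {x // x ∈ D},
      u (tRow p) = (⟨k, Nat.lt_of_succ_lt hk⟩ : Fin n) ∧
      u (tRow q) = (⟨k + 1, hk⟩ : Fin n) ∧
      q.1.1 < p.1.1 ∧ p.1.2 < q.1.2) ∧
    (∀ p q : {x // x ∈ D}, p.1.1 ≤ q.1.1 → p.1.2 ≤ q.1.2 →
      (Equiv.swap (⟨k, Nat.lt_of_succ_lt hk⟩ : Fin n) ⟨k + 1, hk⟩ * u) (tRow p) ≤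
      (Equiv.swap (⟨k, Nat.lt_of_succ_lt hk⟩ : Fin n) ⟨k + 1, hk⟩ * u) (tRow q)) := by
  set a : Fin n := ⟨k, Nat.lt_of_succ_lt hk⟩
  set b : Fin n := ⟨k + 1, hk⟩
  have hab : a ⋖ b := ⟨Fin.lt_def.mpr (by simp [a, b]), fun c h₁ h₂ => by
    simp only [Fin.lt_def, a, b] at h₁ h₂; omega⟩
  have hT : IsStandardTableau (u ∘ tRow) := hstd
  have hba : u.symm b < u.symm a := symm_lt_symm_of_invCount_swap_mul_lt hab (by omega)
  have hNE : ∀ p q, u (tRow p) = a → u (tRow q) = b → q.1.1 < p.1.1 ∧ p.1.2 < q.1.2 := by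
    intro p q hp hq
    refine hT.northEast_of_lt_of_readBefore (by simpa [hp, hq] using hab.1) ((hRow q p).mp ?_)
    rwa [u.eq_symm_apply.mpr hp, u.eq_symm_apply.mpr hq]
  refine ⟨⟨tRow.symm (u.symm a), tRow.symm (u.symm b), by simp, by simp,
    hNE _ _ (by simp) (by simp)⟩, ?_⟩
  exact hT.swap_comp hab fun p q hp hq => (hNE p q hp hq).1

/-- Lemma 3.1(i): `D` a diagram of size `n`, `tRow` the row-filling tableau `t^D`
(characterized by increasing along the row-reading order), `u ∈ Sₙ` with `t^D u`
standard.  If `ℓ(u s_k) = ℓ(u) - 1` (the permutation obtained by further swapping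
the entries `k`, `k+1` of the row-form has one fewer inversion), then the entry
`k+1` is strictly north-east of the entry `k` in `t^D u`, and swapping the entries
`k` and `k+1` yields again a standard `D`-tableau.  (Entries are 0-indexed.) -/
theorem stmt_11 (n : ℕ) (D : Finset (ℕ × ℕ)) (hcard : D.card = n)
    (tRow : {x // x ∈ D} ≃ Fin n)
    (hRow : ∀ p q : {x // x ∈ D},
      tRow p < tRow q ↔ (p.1.1 < q.1.1 ∨ (p.1.1 = q.1.1 ∧ p.1.2 < q.1.2)))
    (u : Equiv.Perm (Fin n))
    (hstd : ∀ p q : {x // x ∈ D},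
      p.1.1 ≤ q.1.1 → p.1.2 ≤ q.1.2 → u (tRow p) ≤ u (tRow q))
    (k : ℕ) (hk : k + 1 < n)
    (hlen : invCount n
        (Equiv.swap (⟨k, Nat.lt_of_succ_lt hk⟩ : Fin n) ⟨k + 1, hk⟩ * u) + 1 =
      invCount n u) :
    (∃ p q : {x // x ∈ D},
      u (tRow p) = (⟨k, Nat.lt_of_succ_lt hk⟩ : Fin n) ∧
      u (tRow q) = (⟨k + 1, hk⟩ : Fin n) ∧
      q.1.1 < p.1.1 ∧ p.1.2 < q.1.2) ∧
    (∀ p q : {x // x ∈ D}, p.1.1 ≤ q.1.1 → p.1.2 ≤ q.1.2 →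
      (Equiv.swap (⟨k, Nat.lt_of_succ_lt hk⟩ : Fin n) ⟨k + 1, hk⟩ * u) (tRow p) ≤
      (Equiv.swap (⟨k, Nat.lt_of_succ_lt hk⟩ : Fin n) ⟨k + 1, hk⟩ * u) (tRow q)) :=
  stmt_11_general n D tRow hRow u hstd k hk hlen
end

section
/- Let $D$ be a diagram of size $n$, let $t^D$ be the row-filling tableau, and let $w_D \in S_n$ be defined by $t^D w_D = t_D$ where $t_D$ is the column-filling tableau. Define $\Psi_D = \{\epsilon_l - \epsilon_m : l \ne m, \text{ and } m \text{ is weakly south-east of } l \text{ in } t^D\}$ (i.e., the node of $m$ has row and column index both $\ge$ those of the node of $l$). Then $\Psi_D = N^+(w_D)$, where $N^+(w) = \{\epsilon_i - \epsilon_j \in \Phi^+ : \epsilon_{iw} - \epsilon_{jw} \in \Phi^+\}$ with $\Phi^+ = \{\epsilon_i - \epsilon_j : 1 \le i < j \le n\}$. -/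
/-!
Filling `D` by rows orders its nodes lexicographically, filling by columns orders them
lexicographically after swapping the coordinates, and two nodes are strictly ordered
componentwise exactly when they are strictly ordered in both of these lexicographic orders.
-/

theorem Prod.lt_iff_toLex_lt_and_toLex_swap_lt {α β : Type*} [PartialOrder α] [PartialOrder β]
    {a b : α × β} : a < b ↔ toLex a < toLex b ∧ toLex a.swap < toLex b.swap := by
  constructor
  · intro h
    exact ⟨Prod.Lex.toLex_strictMono h, Prod.Lex.toLex_strictMono (Prod.swap_lt_swap.2 h)⟩
  · rintro ⟨h, hswap⟩
    have hle : a ≤ b :=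
      ⟨(Prod.Lex.toLex_lt_toLex'.1 h).1, (Prod.Lex.toLex_lt_toLex'.1 hswap).1⟩
    exact hle.lt_of_ne fun hab => h.ne (congrArg toLex hab)

theorem stmt_12_general (n : ℕ) (D : Finset (ℕ × ℕ))
    (tRow tCol : {x // x ∈ D} ≃ Fin n)
    (hRow : ∀ p q : {x // x ∈ D},
      tRow p < tRow q ↔ (p.1.1 < q.1.1 ∨ (p.1.1 = q.1.1 ∧ p.1.2 < q.1.2)))
    (hCol : ∀ p q : {x // x ∈ D},
      tCol p < tCol q ↔ (p.1.2 < q.1.2 ∨ (p.1.2 = q.1.2 ∧ p.1.1 < q.1.1)))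
    (wD : Equiv.Perm (Fin n)) (hw : ∀ p : {x // x ∈ D}, wD (tRow p) = tCol p) :
    {lm : Fin n × Fin n | lm.1 ≠ lm.2 ∧
        ∃ p q : {x // x ∈ D}, tRow p = lm.1 ∧ tRow q = lm.2 ∧
          p.1.1 ≤ q.1.1 ∧ p.1.2 ≤ q.1.2} =
      {lm : Fin n × Fin n | lm.1 < lm.2 ∧ wD lm.1 < wD lm.2} := by
  ext ⟨l, m⟩
  obtain ⟨p, rfl⟩ := tRow.surjective l
  obtain ⟨q, rfl⟩ := tRow.surjective m
  have hRow' : tRow p < tRow q ↔ toLex p.1 < toLex q.1 :=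
    (hRow p q).trans Prod.Lex.toLex_lt_toLex.symm
  have hCol' : wD (tRow p) < wD (tRow q) ↔ toLex p.1.swap < toLex q.1.swap := by
    simp only [hw, hCol, Prod.Lex.toLex_lt_toLex, Prod.fst_swap, Prod.snd_swap]
  simp only [Set.mem_ofPred_eq, ne_eq, EmbeddingLike.apply_eq_iff_eq, exists_and_left,
    exists_eq_left, hRow', hCol']
  rw [← Prod.lt_iff_toLex_lt_and_toLex_swap_lt, lt_iff_le_and_ne, Prod.le_def, Ne,
    ← Subtype.ext_iff, and_comm]

/-- Lemma 3.2(i) (`Ψ_D = N⁺(w_D)`).  Roots `ε_l - ε_m` (`l ≠ m`) are encoded as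
ordered pairs `(l, m)` of elements of `Fin n`.  `tRow` is the row-filling tableau
`t^D`, `tCol` the column-filling tableau `t_D`, and `w_D` is the permutation with
`t^D w_D = t_D`.  Then the set `Ψ_D` of roots `ε_l - ε_m` such that `l ≠ m` and the
node of `m` is weakly south-east of the node of `l` in `t^D` equals
`N⁺(w_D) = {ε_i - ε_j ∈ Φ⁺ : (ε_i - ε_j) w_D ∈ Φ⁺}`. -/
theorem stmt_12 (n : ℕ) (D : Finset (ℕ × ℕ)) (hcard : D.card = n)
    (tRow tCol : {x // x ∈ D} ≃ Fin n)
    (hRow : ∀ p q : {x // x ∈ D},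
      tRow p < tRow q ↔ (p.1.1 < q.1.1 ∨ (p.1.1 = q.1.1 ∧ p.1.2 < q.1.2)))
    (hCol : ∀ p q : {x // x ∈ D},
      tCol p < tCol q ↔ (p.1.2 < q.1.2 ∨ (p.1.2 = q.1.2 ∧ p.1.1 < q.1.1)))
    (wD : Equiv.Perm (Fin n)) (hw : ∀ p : {x // x ∈ D}, wD (tRow p) = tCol p) :
    {lm : Fin n × Fin n | lm.1 ≠ lm.2 ∧
        ∃ p q : {x // x ∈ D}, tRow p = lm.1 ∧ tRow q = lm.2 ∧
          p.1.1 ≤ q.1.1 ∧ p.1.2 ≤ q.1.2} =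
      {lm : Fin n × Fin n | lm.1 < lm.2 ∧ wD lm.1 < wD lm.2} :=
  stmt_12_general n D tRow tCol hRow hCol wD hw
end

section
/- Let $\lambda$ be a composition of $n$, let $D, E$ be diagrams with row-composition $\lambda$, and let $\theta = \theta_{E,D} : E \to D$ be the natural row-preserving, order-preserving-within-rows bijection. Suppose that $t^E w_D$ is a standard $E$-tableau. Then for every $k$-path $\Pi = (\pi_1, \ldots, \pi_k)$ in $E$, the image $\Pi\theta = (\pi_1\theta, \ldots, \pi_k\theta)$ is a $k$-path in $D$. -/
/-!
Since `θ` preserves rows and the order within rows, and `E`, `D` have the same row lengths, a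
node `p` of `E` has the same position in the row reading of `E` as `θ p` in the row reading of
`D`. Hence `(t^E w_D)(p) = t_D(θ p)` is the position of `θ p` in the column reading of `D`, and
standardness of `t^E w_D` says that `θ` weakly increases column indices from a node to any node
south-east of it. So `θ` maps paths to paths, and being injective it keeps them disjoint.
-/

open Finset

lemma Equiv.val_eq_card_filter_of_lt_iff {α : Type*} {n : ℕ} {S : Finset α}
    (e : {x // x ∈ S} ≃ Fin n) (r : α → α → Prop) [DecidableRel r]
    (h : ∀ p q : {x // x ∈ S}, e p < e q ↔ r p.1 q.1) (p : {x // x ∈ S}) :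
    (e p : ℕ) = #{q ∈ S | r q p.1} := by
  rw [← Fin.card_Iio (e p)]
  symm
  refine card_bij (fun q hq => e ⟨q, (mem_filter.mp hq).1⟩) ?_ ?_ ?_
  · intro q hq
    exact mem_Iio.mpr ((h _ _).2 (mem_filter.mp hq).2)
  · intro a _ b _ hab
    exact congrArg Subtype.val (e.injective hab)
  · intro j hj
    refine ⟨(e.symm j).1, mem_filter.mpr ⟨(e.symm j).2, (h _ _).1 ?_⟩, by simp⟩
    simpa using mem_Iio.mp hj

lemma card_filter_fst_lt_eq_of_rows {D E : Finset (ℕ × ℕ)}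
    (hrows : ∀ i, #{q ∈ E | q.1 = i} = #{q ∈ D | q.1 = i}) (m : ℕ) :
    #{q ∈ E | q.1 < m} = #{q ∈ D | q.1 < m} := by
  have hfib (S : Finset (ℕ × ℕ)) :
      #{q ∈ S | q.1 < m} = ∑ i ∈ range m, #{q ∈ S | q.1 = i} := by
    rw [card_eq_sum_card_fiberwise (f := Prod.fst) (t := range m)
      fun q hq => mem_range.mpr (mem_filter.mp hq).2]
    refine sum_congr rfl fun i hi => ?_
    rw [filter_filter]
    congr 1
    exact filter_congr fun q _ => by simp only [mem_range] at hi; omega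
  rw [hfib, hfib]
  exact sum_congr rfl fun i _ => hrows i

lemma card_filter_lex_lt (S : Finset (ℕ × ℕ)) (p : ℕ × ℕ) :
    #{q ∈ S | q.1 < p.1 ∨ (q.1 = p.1 ∧ q.2 < p.2)}
      = #{q ∈ S | q.1 < p.1} + #{q ∈ S | q.1 = p.1 ∧ q.2 < p.2} := by
  rw [filter_or, card_union_of_disjoint (disjoint_filter.mpr fun q _ h h' => by omega)]

lemma IsPath.map {E D : Finset (ℕ × ℕ)} {θ : ℕ × ℕ → ℕ × ℕ} (hmaps : Set.MapsTo θ E D)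
    (hmono : ∀ p ∈ E, ∀ q ∈ E, p.1 < q.1 → p.2 ≤ q.2 → (θ p).1 < (θ q).1 ∧ (θ p).2 ≤ (θ q).2)
    {π : List (ℕ × ℕ)} (hπ : IsPath E π) : IsPath D (π.map θ) := by
  obtain ⟨hne, hmem, hchain⟩ := hπ
  refine ⟨by simpa using hne, ?_, ?_⟩
  · simp only [List.mem_map, forall_exists_index, and_imp, forall_apply_eq_imp_iff₂]
    exact fun p hp => hmaps (hmem p hp)
  · exact List.isChain_map_of_isChain θ (fun p q h => h) <|
      hchain.imp_of_mem_imp fun p q hp hq h => hmono p (hmem p hp) q (hmem q hq) h.1 h.2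

lemma IsKPath.map {E D : Finset (ℕ × ℕ)} {θ : ℕ × ℕ → ℕ × ℕ} (hmaps : Set.MapsTo θ E D)
    (hinj : Set.InjOn θ E)
    (hmono : ∀ p ∈ E, ∀ q ∈ E, p.1 < q.1 → p.2 ≤ q.2 → (θ p).1 < (θ q).1 ∧ (θ p).2 ≤ (θ q).2)
    {P : List (List (ℕ × ℕ))} (hP : IsKPath E P) : IsKPath D (P.map (List.map θ)) := by
  obtain ⟨hpaths, hdisj⟩ := hP
  refine ⟨?_, List.pairwise_map.mpr <| hdisj.imp_of_mem fun hπ hρ h => ?_⟩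
  · simp only [List.mem_map, forall_exists_index, and_imp, forall_apply_eq_imp_iff₂]
    exact fun π hπ => (hpaths π hπ).map hmaps hmono
  · simp only [List.mem_map, forall_exists_index, and_imp, forall_apply_eq_imp_iff₂]
    rintro p hp ⟨q, hq, hqp⟩
    exact h p hp (hinj ((hpaths _ hρ).2.1 q hq) ((hpaths _ hπ).2.1 p hp) hqp ▸ hq)

lemma rowReading_apply_eq {n : ℕ} {D E : Finset (ℕ × ℕ)}
    (hrows : ∀ i, #{q ∈ E | q.1 = i} = #{q ∈ D | q.1 = i})
    {θ : ℕ × ℕ → ℕ × ℕ} (hmaps : Set.MapsTo θ E D) (hθrow : ∀ p ∈ E, (θ p).1 = p.1)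
    (hθord : ∀ p ∈ E, #{q ∈ E | q.1 = p.1 ∧ q.2 < p.2} = #{q ∈ D | q.1 = (θ p).1 ∧ q.2 < (θ p).2})
    (tRowE : {x // x ∈ E} ≃ Fin n)
    (hRowE : ∀ p q : {x // x ∈ E},
      tRowE p < tRowE q ↔ (p.1.1 < q.1.1 ∨ (p.1.1 = q.1.1 ∧ p.1.2 < q.1.2)))
    (tRowD : {x // x ∈ D} ≃ Fin n)
    (hRowD : ∀ p q : {x // x ∈ D},
      tRowD p < tRowD q ↔ (p.1.1 < q.1.1 ∨ (p.1.1 = q.1.1 ∧ p.1.2 < q.1.2)))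
    (p : {x // x ∈ E}) :
    tRowE p = tRowD ⟨θ p, hmaps p.2⟩ := by
  let lexLt : ℕ × ℕ → ℕ × ℕ → Prop := fun a b => a.1 < b.1 ∨ (a.1 = b.1 ∧ a.2 < b.2)
  refine Fin.ext ?_
  rw [Equiv.val_eq_card_filter_of_lt_iff tRowE lexLt hRowE,
    Equiv.val_eq_card_filter_of_lt_iff tRowD lexLt hRowD, card_filter_lex_lt, card_filter_lex_lt,
    hθord p.1 p.2, hθrow p.1 p.2, card_filter_fst_lt_eq_of_rows hrows]

lemma snd_le_snd_of_standard {n : ℕ} {D E : Finset (ℕ × ℕ)} {θ : ℕ × ℕ → ℕ × ℕ}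
    (hmaps : Set.MapsTo θ E D) (tRowE : {x // x ∈ E} ≃ Fin n) (tRowD tColD : {x // x ∈ D} ≃ Fin n)
    (hColD : ∀ p q : {x // x ∈ D},
      tColD p < tColD q ↔ (p.1.2 < q.1.2 ∨ (p.1.2 = q.1.2 ∧ p.1.1 < q.1.1)))
    (wD : Equiv.Perm (Fin n)) (hw : ∀ p : {x // x ∈ D}, wD (tRowD p) = tColD p)
    (hstd : ∀ p q : {x // x ∈ E}, p.1.1 ≤ q.1.1 → p.1.2 ≤ q.1.2 →
      wD (tRowE p) ≤ wD (tRowE q))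
    (hrank : ∀ p : {x // x ∈ E}, tRowE p = tRowD ⟨θ p, hmaps p.2⟩)
    {p q : ℕ × ℕ} (hp : p ∈ E) (hq : q ∈ E) (h₁ : p.1 ≤ q.1) (h₂ : p.2 ≤ q.2) :
    (θ p).2 ≤ (θ q).2 := by
  have hcol : tColD ⟨θ p, hmaps hp⟩ ≤ tColD ⟨θ q, hmaps hq⟩ := by
    simpa only [hrank, hw] using hstd ⟨p, hp⟩ ⟨q, hq⟩ h₁ h₂
  by_contra! hlt
  exact hcol.not_gt ((hColD _ _).mpr (Or.inl hlt))

theorem stmt_14_general (n : ℕ) (D E : Finset (ℕ × ℕ))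
    (hrowcomp : ∀ i : ℕ, (E.filter (fun q => q.1 = i)).card =
      (D.filter (fun q => q.1 = i)).card)
    (θ : ℕ × ℕ → ℕ × ℕ) (hθbij : Set.BijOn θ ↑E ↑D)
    (hθrow : ∀ p ∈ E, (θ p).1 = p.1)
    (hθord : ∀ p ∈ E, (E.filter (fun q => q.1 = p.1 ∧ q.2 < p.2)).card =
      (D.filter (fun q => q.1 = (θ p).1 ∧ q.2 < (θ p).2)).card)
    (tRowE : {x // x ∈ E} ≃ Fin n)
    (hRowE : ∀ p q : {x // x ∈ E},
      tRowE p < tRowE q ↔ (p.1.1 < q.1.1 ∨ (p.1.1 = q.1.1 ∧ p.1.2 < q.1.2)))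
    (tRowD tColD : {x // x ∈ D} ≃ Fin n)
    (hRowD : ∀ p q : {x // x ∈ D},
      tRowD p < tRowD q ↔ (p.1.1 < q.1.1 ∨ (p.1.1 = q.1.1 ∧ p.1.2 < q.1.2)))
    (hColD : ∀ p q : {x // x ∈ D},
      tColD p < tColD q ↔ (p.1.2 < q.1.2 ∨ (p.1.2 = q.1.2 ∧ p.1.1 < q.1.1)))
    (wD : Equiv.Perm (Fin n)) (hw : ∀ p : {x // x ∈ D}, wD (tRowD p) = tColD p)
    (hstd : ∀ p q : {x // x ∈ E}, p.1.1 ≤ q.1.1 → p.1.2 ≤ q.1.2 →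
      wD (tRowE p) ≤ wD (tRowE q)) :
    ∀ P : List (List (ℕ × ℕ)), IsKPath E P → IsKPath D (P.map (List.map θ)) := by
  intro P hP
  have hmaps := hθbij.mapsTo
  have hrank := rowReading_apply_eq hrowcomp hmaps hθrow hθord tRowE hRowE tRowD hRowD
  refine hP.map hmaps hθbij.injOn fun p hp q hq hlt hle => ⟨?_, ?_⟩
  · rwa [hθrow p hp, hθrow q hq]
  · exact snd_le_snd_of_standard hmaps tRowE tRowD tColD hColD wD hw hstd hrank hp hq hlt.le hle

/-- Proposition 2.3: `D, E` diagrams with the same row-composition `λ`,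
`θ = θ_{E,D} : E → D` the natural bijection sending the `l`-th node of the `i`-th
row of `E` to the `l`-th node of the `i`-th row of `D`.  If `t^E w_D` is a standard
`E`-tableau (where `t^E` is the row-filling tableau of `E` and `w_D` satisfies
`t^D w_D = t_D`), then the image under `θ` of any `k`-path in `E` is a `k`-path
in `D`. -/
theorem stmt_14 (n : ℕ) (D E : Finset (ℕ × ℕ)) (hD : D.card = n) (hE : E.card = n)
    (hrowcomp : ∀ i : ℕ, (E.filter (fun q => q.1 = i)).card =
      (D.filter (fun q => q.1 = i)).card)
    (θ : ℕ × ℕ → ℕ × ℕ) (hθbij : Set.BijOn θ ↑E ↑D)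
    (hθrow : ∀ p ∈ E, (θ p).1 = p.1)
    (hθord : ∀ p ∈ E, (E.filter (fun q => q.1 = p.1 ∧ q.2 < p.2)).card =
      (D.filter (fun q => q.1 = (θ p).1 ∧ q.2 < (θ p).2)).card)
    (tRowE : {x // x ∈ E} ≃ Fin n)
    (hRowE : ∀ p q : {x // x ∈ E},
      tRowE p < tRowE q ↔ (p.1.1 < q.1.1 ∨ (p.1.1 = q.1.1 ∧ p.1.2 < q.1.2)))
    (tRowD tColD : {x // x ∈ D} ≃ Fin n)
    (hRowD : ∀ p q : {x // x ∈ D},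
      tRowD p < tRowD q ↔ (p.1.1 < q.1.1 ∨ (p.1.1 = q.1.1 ∧ p.1.2 < q.1.2)))
    (hColD : ∀ p q : {x // x ∈ D},
      tColD p < tColD q ↔ (p.1.2 < q.1.2 ∨ (p.1.2 = q.1.2 ∧ p.1.1 < q.1.1)))
    (wD : Equiv.Perm (Fin n)) (hw : ∀ p : {x // x ∈ D}, wD (tRowD p) = tColD p)
    (hstd : ∀ p q : {x // x ∈ E}, p.1.1 ≤ q.1.1 → p.1.2 ≤ q.1.2 →
      wD (tRowE p) ≤ wD (tRowE q)) :
    ∀ P : List (List (ℕ × ℕ)), IsKPath E P → IsKPath D (P.map (List.map θ)) :=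
  stmt_14_general n D E hrowcomp θ hθbij hθrow hθord tRowE hRowE tRowD tColD hRowD hColD wD hw hstd
end

section
/- A diagram $D$ is special (obtainable from a Young diagram by permuting rows and columns) if and only if for every pair of nodes $(i,j), (i',j') \in D$ with $i \ne i'$ and $j \ne j'$, at least one of $(i',j)$ and $(i,j')$ is also a node of $D$. This in turn is equivalent to $\lambda_D'' = \mu_D'$, where $\lambda_D$ and $\mu_D$ are the row- and column-compositions of $D$ and prime denotes conjugation. -/
/-!
The crossing condition says exactly that the rows of `D` are nested: every row lies in each row
that is at least as long. Its symmetry gives nested columns as well, and sorting rows and columns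
by decreasing length then turns `D` into a Young diagram. Conversely a Young diagram, and every
image of it under relabellings of rows and columns, satisfies the crossing condition.

For nested rows, the shortest of `t` rows of length `≥ k` lies in all of them, so its `≥ k`
columns have length `≥ t`: `t ≤ λ'_k → k ≤ μ'_t`. Together with the transposed statement and
`k ≤ λ''_t ↔ t ≤ λ'_k` this gives `λ'' = μ'`. Conversely, for a set `T` of longest rows, counting
the nodes in these rows column by column gives `λ''_1 + ⋯ + λ''_{#T} ≤ μ'_1 + ⋯ + μ'_{#T}`, with
equality only if every column contains `T` or lies inside `T`; under `λ'' = μ'` this forces the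
rows to be nested.
-/

/-- Number of nodes on row `i` of `D`. -/
def rowCount (D : Finset (ℕ × ℕ)) (i : ℕ) : ℕ :=
  (D.filter (fun q => q.1 = i)).card

/-- Number of nodes on column `j` of `D`. -/
def colCount (D : Finset (ℕ × ℕ)) (j : ℕ) : ℕ :=
  (D.filter (fun q => q.2 = j)).card

/-- The `i`-th part of the conjugate `λ_D'` of the row-composition of `D`:
the number of rows with at least `i` nodes. -/
def rowConj (D : Finset (ℕ × ℕ)) (i : ℕ) : ℕ :=
  ((D.image Prod.fst).filter (fun a => i ≤ rowCount D a)).card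

/-- The `i`-th part of the double conjugate `λ_D''` of the row-composition:
the number of (potential) parts `k ∈ {1,…,|D|}` of `λ_D'` with `λ'_k ≥ i`. -/
def rowConj2 (D : Finset (ℕ × ℕ)) (i : ℕ) : ℕ :=
  ((Finset.Icc 1 D.card).filter (fun k => i ≤ rowConj D k)).card

/-- The `i`-th part of the conjugate `μ_D'` of the column-composition of `D`:
the number of columns with at least `i` nodes. -/
def colConj (D : Finset (ℕ × ℕ)) (i : ℕ) : ℕ :=
  ((D.image Prod.snd).filter (fun b => i ≤ colCount D b)).card

/-- The Young diagram `V(ν)` of a (list-encoded) partition `ν`, with rows and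
columns indexed from 1. -/
def youngD (ν : List ℕ) : Finset (ℕ × ℕ) :=
  (Finset.range ν.length).biUnion
    (fun i => (Finset.Icc 1 (ν.getD i 0)).image (fun j => (i + 1, j)))

/-- `D` is special: obtained from a Young diagram by permuting rows and columns. -/
def IsSpecial (D : Finset (ℕ × ℕ)) : Prop :=
  ∃ ν : List ℕ, ν ≠ [] ∧ (∀ x ∈ ν, 0 < x) ∧ ν.Pairwise (· ≥ ·) ∧
    ∃ σ τ : Equiv.Perm ℕ,
      (∀ i ∈ Finset.Icc 1 ν.length, σ i ∈ Finset.Icc 1 ν.length) ∧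
      (∀ j ∈ Finset.Icc 1 ν.headI, τ j ∈ Finset.Icc 1 ν.headI) ∧
      D = (youngD ν).image (fun p => (σ p.1, τ p.2))

open Finset

lemma Finset.eq_Icc_one_card {P : Finset ℕ} (h0 : 0 ∉ P)
    (hdown : ∀ b ∈ P, ∀ a, 1 ≤ a → a ≤ b → a ∈ P) : P = Icc 1 #P := by
  ext b
  rw [mem_Icc]
  constructor
  · intro hb
    have hb1 : 1 ≤ b := Nat.one_le_iff_ne_zero.2 fun h => h0 (h ▸ hb)
    have hsub : Icc 1 b ⊆ P := fun a ha => hdown b hb a (mem_Icc.1 ha).1 (mem_Icc.1 ha).2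
    exact ⟨hb1, by simpa using card_le_card hsub⟩
  · rintro ⟨hb1, hbP⟩
    by_contra hb
    have hsub : P ⊆ Icc 1 (b - 1) := fun a ha => by
      have ha1 : 1 ≤ a := Nat.one_le_iff_ne_zero.2 fun h => h0 (h ▸ ha)
      have hab : a < b := lt_of_not_ge fun hba => hb (hdown a ha b hb1 hba)
      exact mem_Icc.2 ⟨ha1, by omega⟩
    have := card_le_card hsub
    simp only [Nat.card_Icc] at this
    omega

lemma Finset.sum_min_eq_sum_card_filter {α : Type*} (s : Finset α) (f : α → ℕ) (k : ℕ) :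
    ∑ x ∈ s, min (f x) k = ∑ t ∈ Icc 1 k, #{x ∈ s | t ≤ f x} := by
  have hmin : ∀ x, min (f x) k = #{t ∈ Icc 1 k | t ≤ f x} := fun x => by
    rw [show {t ∈ Icc 1 k | t ≤ f x} = Icc 1 (min (f x) k) by ext; simp; omega]
    simp
  simp_rw [hmin, card_filter]
  exact sum_comm

lemma Finset.exists_perm_antitoneOn {α β : Type*} [LinearOrder α] [LinearOrder β]
    (s : Finset α) (f : α → β) :
    ∃ σ : Equiv.Perm α, (∀ a, σ a ∈ s ↔ a ∈ s) ∧
      ∀ a ∈ s, ∀ b ∈ s, a ≤ b → f (σ b) ≤ f (σ a) := by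
  classical
  let e := s.orderIsoOfFin rfl
  let g : Fin #s → βᵒᵈ := fun x => OrderDual.toDual (f (e x))
  refine ⟨(Tuple.sort g).extendDomain e.toEquiv, fun a => ?_, fun a ha b hb hab => ?_⟩
  · by_cases ha : a ∈ s
    · simp [Equiv.Perm.extendDomain_apply_subtype _ _ ha, ha]
    · simp [Equiv.Perm.extendDomain_apply_not_subtype _ _ ha, ha]
  · rw [Equiv.Perm.extendDomain_apply_subtype _ _ ha,
      Equiv.Perm.extendDomain_apply_subtype _ _ hb]
    exact Tuple.monotone_sort g (e.symm.monotone (show (⟨a, ha⟩ : s) ≤ ⟨b, hb⟩ from hab))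

def CrossClosed (D : Finset (ℕ × ℕ)) : Prop :=
  ∀ p ∈ D, ∀ q ∈ D, p.1 ≠ q.1 → p.2 ≠ q.2 → ((q.1, p.2) ∈ D ∨ (p.1, q.2) ∈ D)

def RowsNested (D : Finset (ℕ × ℕ)) : Prop :=
  ∀ i i' j, rowCount D i ≤ rowCount D i' → (i, j) ∈ D → (i', j) ∈ D

def diagTranspose (D : Finset (ℕ × ℕ)) : Finset (ℕ × ℕ) :=
  D.map (Equiv.prodComm ℕ ℕ).toEmbedding

section Counting

variable {D : Finset (ℕ × ℕ)}

lemma rowCount_le_card (i : ℕ) : rowCount D i ≤ #D := card_filter_le _ _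

lemma rowCount_pos_iff {i : ℕ} : 0 < rowCount D i ↔ i ∈ D.image Prod.fst := by
  simp [rowCount, card_pos, Finset.Nonempty]

lemma rowCount_le_card_of_forall {i : ℕ} {S : Finset ℕ} (hS : ∀ j, (i, j) ∈ D → j ∈ S) :
    rowCount D i ≤ #S := by
  refine card_le_card_of_injOn Prod.snd (fun p hp => ?_) fun p hp q hq hpq => ?_
  · obtain ⟨hpD, rfl⟩ := mem_filter.1 hp
    exact hS _ hpD
  · exact Prod.ext ((mem_filter.1 hp).2.trans (mem_filter.1 hq).2.symm) hpq

lemma card_le_colCount {j : ℕ} {T : Finset ℕ} (hT : ∀ i ∈ T, (i, j) ∈ D) :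
    #T ≤ colCount D j :=
  card_le_card_of_injOn (fun i => (i, j)) (fun i hi => mem_filter.2 ⟨hT i hi, rfl⟩)
    fun _ _ _ _ h => congrArg Prod.fst h

lemma rowConj_antitone : Antitone (rowConj D) := fun _ _ h =>
  card_le_card fun _ ha => by
    simp only [mem_filter] at ha ⊢
    exact ⟨ha.1, h.trans ha.2⟩

end Counting

section Transpose

variable {D : Finset (ℕ × ℕ)}

@[simp]
lemma mem_diagTranspose {a b : ℕ} : (a, b) ∈ diagTranspose D ↔ (b, a) ∈ D := by
  simp [diagTranspose]

lemma rowCount_diagTranspose : rowCount (diagTranspose D) = colCount D := by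
  ext i
  rw [rowCount, colCount, diagTranspose, filter_map, card_map]
  rfl

lemma colCount_diagTranspose : colCount (diagTranspose D) = rowCount D := by
  ext i
  rw [rowCount, colCount, diagTranspose, filter_map, card_map]
  rfl

lemma image_fst_diagTranspose : (diagTranspose D).image Prod.fst = D.image Prod.snd := by
  rw [diagTranspose, map_eq_image, image_image]
  rfl

lemma image_snd_diagTranspose : (diagTranspose D).image Prod.snd = D.image Prod.fst := by
  rw [diagTranspose, map_eq_image, image_image]
  rfl

lemma rowConj_diagTranspose : rowConj (diagTranspose D) = colConj D := by
  ext k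
  rw [rowConj, colConj, rowCount_diagTranspose, image_fst_diagTranspose]

lemma colConj_diagTranspose : colConj (diagTranspose D) = rowConj D := by
  ext k
  rw [rowConj, colConj, colCount_diagTranspose, image_snd_diagTranspose]

lemma CrossClosed.diagTranspose (h : CrossClosed D) : CrossClosed (diagTranspose D) := by
  rintro ⟨a, b⟩ hp ⟨a', b'⟩ hq hne1 hne2
  simp only [mem_diagTranspose] at hp hq ⊢
  exact (h _ hp _ hq hne2 hne1).symm

end Transpose

section Nested

variable {D : Finset (ℕ × ℕ)}

/-- If `(i, j) ∈ D` but `(i', j) ∉ D`, cross-closedness puts every node `(i', j')` of row `i'`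
into row `i` as `(i, j')`, so row `i'` is strictly shorter than row `i`. -/
lemma CrossClosed.rowsNested (h : CrossClosed D) : RowsNested D := by
  intro i i' j hle hij
  by_contra hi'j
  have hmem : (i, j) ∈ {q ∈ D | q.1 = i} := mem_filter.2 ⟨hij, rfl⟩
  have hpos : 0 < rowCount D i := card_pos.2 ⟨_, hmem⟩
  have hsub : rowCount D i' ≤ rowCount D i - 1 := by
    unfold rowCount
    rw [← card_erase_of_mem hmem]
    refine card_le_card_of_injOn (fun p => (i, p.2)) (fun p hp => ?_) fun p hp q hq hpq => ?_
    · obtain ⟨hpD, rfl⟩ := mem_filter.1 hp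
      have hpj : p.2 ≠ j := fun hpj => hi'j (hpj ▸ hpD)
      have hii : p.1 ≠ i := fun hpi => hi'j (hpi ▸ hij)
      have hip : (i, p.2) ∈ D := (h p hpD (i, j) hij hii hpj).resolve_right hi'j
      simp [hip, hpj]
    · exact Prod.ext ((mem_filter.1 hp).2.trans (mem_filter.1 hq).2.symm) (congrArg Prod.snd hpq :)
  omega

lemma RowsNested.crossClosed (h : RowsNested D) : CrossClosed D := by
  intro p hp q hq _ _
  rcases le_total (rowCount D p.1) (rowCount D q.1) with hpq | hqp
  · exact Or.inl (h _ _ _ hpq hp)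
  · exact Or.inr (h _ _ _ hqp hq)

lemma RowsNested.le_colConj_of_le_rowConj (h : RowsNested D) {t k : ℕ} (ht : 1 ≤ t)
    (hk : t ≤ rowConj D k) : k ≤ colConj D t := by
  set S := {a ∈ D.image Prod.fst | k ≤ rowCount D a}
  have hS : S.Nonempty := card_pos.1 (lt_of_lt_of_le ht hk)
  obtain ⟨i₀, hi₀, hmin⟩ := S.exists_min_image (rowCount D) hS
  have hcols : ∀ j, (i₀, j) ∈ D → j ∈ {b ∈ D.image Prod.snd | t ≤ colCount D b} :=
    fun j hj => mem_filter.2 ⟨mem_image_of_mem Prod.snd hj,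
      hk.trans (card_le_colCount fun i hi => h i₀ i j (hmin i hi) hj)⟩
  exact (mem_filter.1 hi₀).2.trans (rowCount_le_card_of_forall hcols)

lemma le_rowConj2_iff {t k : ℕ} (ht : 1 ≤ t) (hk : 1 ≤ k) :
    k ≤ rowConj2 D t ↔ t ≤ rowConj D k := by
  set P := {s ∈ Icc 1 #D | t ≤ rowConj D s}
  have hP : P = Icc 1 #P := eq_Icc_one_card (by simp [P]) fun b hb a ha hab => by
    simp only [P, mem_filter, mem_Icc] at hb ⊢
    exact ⟨⟨ha, hab.trans hb.1.2⟩, hb.2.trans (rowConj_antitone hab)⟩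
  have hkD : t ≤ rowConj D k → k ≤ #D := fun hle => by
    obtain ⟨a, ha⟩ := card_pos.1 (lt_of_lt_of_le ht hle)
    exact (mem_filter.1 ha).2.trans (rowCount_le_card a)
  calc k ≤ rowConj2 D t ↔ k ∈ Icc 1 #P := by simp [rowConj2, P, hk]
    _ ↔ k ∈ P := by rw [← hP]
    _ ↔ t ≤ rowConj D k := by
      simp only [P, mem_filter, mem_Icc]
      exact ⟨fun h => h.2, fun h => ⟨⟨hk, hkD h⟩, h⟩⟩

lemma CrossClosed.rowConj2_eq_colConj (h : CrossClosed D) {t : ℕ} (ht : 1 ≤ t) :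
    rowConj2 D t = colConj D t := by
  refine eq_of_forall_le_iff fun k => ?_
  rcases Nat.eq_zero_or_pos k with rfl | hk
  · simp
  rw [le_rowConj2_iff ht hk]
  refine ⟨h.rowsNested.le_colConj_of_le_rowConj ht, fun hle => ?_⟩
  have := h.diagTranspose.rowsNested.le_colConj_of_le_rowConj (k := t) hk
  rw [rowConj_diagTranspose, colConj_diagTranspose] at this
  exact this hle

end Nested

lemma sum_rowCount_eq_sum_card_col (D : Finset (ℕ × ℕ)) (T : Finset ℕ) :
    ∑ i ∈ T, rowCount D i = ∑ j ∈ D.image Prod.snd, #{p ∈ D | p.1 ∈ T ∧ p.2 = j} := by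
  simp only [rowCount]
  rw [sum_card_fiberwise_eq_card_filter,
    card_eq_sum_card_fiberwise fun p hp => mem_image_of_mem Prod.snd (mem_filter.1 hp).1]
  simp only [filter_filter]

lemma card_filter_col_le_min (D : Finset (ℕ × ℕ)) (T : Finset ℕ) (j : ℕ) :
    #{p ∈ D | p.1 ∈ T ∧ p.2 = j} ≤ min (colCount D j) #T := by
  refine le_min (card_le_card fun p hp => ?_) (card_le_card_of_injOn Prod.fst ?_ ?_)
  · exact mem_filter.2 ⟨(mem_filter.1 hp).1, (mem_filter.1 hp).2.2⟩
  · exact fun p hp => (mem_filter.1 hp).2.1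
  · exact fun p hp q hq h => Prod.ext h ((mem_filter.1 hp).2.2.trans (mem_filter.1 hq).2.2.symm)

def IsTopRows (D : Finset (ℕ × ℕ)) (T : Finset ℕ) : Prop :=
  T ⊆ D.image Prod.fst ∧
    ∀ i ∈ T, ∀ i' ∈ D.image Prod.fst, i' ∉ T → rowCount D i' ≤ rowCount D i

section TopRows

variable {D : Finset (ℕ × ℕ)} {T : Finset ℕ}

lemma IsTopRows.card_filter_le_rowCount_eq_min (hT : IsTopRows D T) (s : ℕ) :
    #{i ∈ T | s ≤ rowCount D i} = min (rowConj D s) #T := by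
  by_cases hall : ∀ i ∈ T, s ≤ rowCount D i
  · rw [filter_true_of_mem hall, min_eq_right]
    exact card_le_card fun i hi => mem_filter.2 ⟨hT.1 hi, hall i hi⟩
  · simp only [not_forall, not_le] at hall
    obtain ⟨i₀, hi₀, hlt⟩ := hall
    have heq : {i ∈ T | s ≤ rowCount D i} = {a ∈ D.image Prod.fst | s ≤ rowCount D a} := by
      ext a
      simp only [mem_filter]
      refine ⟨fun ha => ⟨hT.1 ha.1, ha.2⟩, fun ha => ⟨?_, ha.2⟩⟩
      by_contra haT
      exact absurd (hT.2 i₀ hi₀ a ha.1 haT) (by omega)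
    have hle : rowConj D s ≤ #T := by
      rw [rowConj, ← heq]
      exact card_filter_le _ _
    rw [heq, min_eq_left hle]
    rfl

lemma IsTopRows.sum_rowCount (hT : IsTopRows D T) :
    ∑ i ∈ T, rowCount D i = ∑ t ∈ Icc 1 #T, rowConj2 D t := calc
  ∑ i ∈ T, rowCount D i = ∑ i ∈ T, min (rowCount D i) #D :=
      sum_congr rfl fun i _ => (min_eq_left (rowCount_le_card i)).symm
  _ = ∑ s ∈ Icc 1 #D, #{i ∈ T | s ≤ rowCount D i} := sum_min_eq_sum_card_filter _ _ _
  _ = ∑ s ∈ Icc 1 #D, min (rowConj D s) #T :=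
      sum_congr rfl fun s _ => hT.card_filter_le_rowCount_eq_min s
  _ = ∑ t ∈ Icc 1 #T, rowConj2 D t := sum_min_eq_sum_card_filter _ _ _

lemma IsTopRows.col_subset_or_subset_col (hC : ∀ t, 1 ≤ t → rowConj2 D t = colConj D t)
    (hT : IsTopRows D T) {j : ℕ} (hj : j ∈ D.image Prod.snd) :
    (∀ i, (i, j) ∈ D → i ∈ T) ∨ ∀ i ∈ T, (i, j) ∈ D := by
  set F := {p ∈ D | p.1 ∈ T ∧ p.2 = j}
  have heq : #F = min (colCount D j) #T := by
    refine (sum_eq_sum_iff_of_le fun j _ => card_filter_col_le_min D T j).1 ?_ j hj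
    rw [← sum_rowCount_eq_sum_card_col, hT.sum_rowCount, sum_min_eq_sum_card_filter]
    exact sum_congr rfl fun t ht => hC t (mem_Icc.1 ht).1
  have hFcol : F ⊆ {q ∈ D | q.2 = j} := fun p hp =>
    mem_filter.2 ⟨(mem_filter.1 hp).1, (mem_filter.1 hp).2.2⟩
  rcases min_choice (colCount D j) #T with h | h
  · left
    intro i hij
    have hF : F = {q ∈ D | q.2 = j} := eq_of_subset_of_card_le hFcol (by rw [heq, h]; rfl)
    have : (i, j) ∈ F := hF ▸ mem_filter.2 ⟨hij, rfl⟩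
    exact (mem_filter.1 this).2.1
  · right
    intro i hi
    have himg : F.image Prod.fst = T := by
      refine eq_of_subset_of_card_le (fun a ha => ?_) ?_
      · obtain ⟨p, hp, rfl⟩ := mem_image.1 ha
        exact (mem_filter.1 hp).2.1
      · rw [card_image_of_injOn fun p hp q hq hpq =>
          Prod.ext hpq ((mem_filter.1 hp).2.2.trans (mem_filter.1 hq).2.2.symm), heq, h]
    obtain ⟨p, hp, rfl⟩ := mem_image.1 (himg ▸ hi)
    obtain ⟨hpD, -, hpj⟩ := mem_filter.1 hp
    exact hpj ▸ hpD

end TopRows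

/-- Given rows `i, i'` with `i` no longer than `i'`, take for `T` the rows longer than `i'`
together with `i'` itself: column `j` of `(i, j)` is not inside `T`, so it contains `i'`. -/
lemma rowsNested_of_rowConj2_eq_colConj {D : Finset (ℕ × ℕ)}
    (hC : ∀ t, 1 ≤ t → rowConj2 D t = colConj D t) : RowsNested D := by
  intro i i' j hle hij
  have hi' : i' ∈ D.image Prod.fst :=
    rowCount_pos_iff.1 (lt_of_lt_of_le (rowCount_pos_iff.2 (mem_image_of_mem Prod.fst hij)) hle)
  set T := {a ∈ D.image Prod.fst | rowCount D i' < rowCount D a ∨ a = i'}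
  have hT : IsTopRows D T := by
    refine ⟨filter_subset _ _, fun a ha b hb hbT => ?_⟩
    simp only [T, mem_filter, hb, true_and, not_or] at ha hbT
    rcases ha.2 with ha | rfl <;> omega
  rcases hT.col_subset_or_subset_col hC (mem_image_of_mem Prod.snd hij) with h | h
  · rcases (mem_filter.1 (h i hij)).2 with hlt | rfl
    · omega
    · exact hij
  · exact h i' (mem_filter.2 ⟨hi', Or.inr rfl⟩)

lemma mem_youngD {ν : List ℕ} {a b : ℕ} :
    (a, b) ∈ youngD ν ↔ 1 ≤ a ∧ a ≤ ν.length ∧ 1 ≤ b ∧ b ≤ ν.getD (a - 1) 0 := by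
  simp only [youngD, mem_biUnion, mem_range, mem_image, mem_Icc, Prod.mk.injEq]
  constructor
  · rintro ⟨i, hi, b, hb, rfl, rfl⟩
    simpa [hi] using hb
  · rintro ⟨ha1, ha, hb⟩
    exact ⟨a - 1, by omega, b, hb, by omega, rfl⟩

lemma crossClosed_youngD {ν : List ℕ} (hν : ν.Pairwise (· ≥ ·)) : CrossClosed (youngD ν) := by
  have hanti : ∀ a b, a ≤ b → b < ν.length → ν.getD b 0 ≤ ν.getD a 0 := fun a b hab hb => by
    rw [List.getD_eq_getElem _ _ hb, List.getD_eq_getElem _ _ (lt_of_le_of_lt hab hb)]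
    exact hν.rel_get_of_le (a := ⟨a, lt_of_le_of_lt hab hb⟩) (b := ⟨b, hb⟩) hab
  rintro ⟨a, b⟩ hp ⟨a', b'⟩ hq - -
  simp only [mem_youngD] at hp hq ⊢
  rcases le_total a a' with h | h
  · exact Or.inr ⟨hp.1, hp.2.1, hq.2.2.1, hq.2.2.2.trans (hanti _ _ (by omega) (by omega))⟩
  · exact Or.inl ⟨hq.1, hq.2.1, hp.2.2.1, hp.2.2.2.trans (hanti _ _ (by omega) (by omega))⟩

lemma CrossClosed.image_prodMap {D : Finset (ℕ × ℕ)} (h : CrossClosed D) (σ τ : ℕ → ℕ) :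
    CrossClosed (D.image (Prod.map σ τ)) := by
  simp only [CrossClosed, mem_image, forall_exists_index, and_imp]
  rintro _ p hp rfl _ q hq rfl h1 h2
  rcases h p hp q hq (fun e => h1 (congrArg σ e)) (fun e => h2 (congrArg τ e)) with h' | h'
  · exact Or.inl ⟨_, h', rfl⟩
  · exact Or.inr ⟨_, h', rfl⟩

lemma IsSpecial.crossClosed {D : Finset (ℕ × ℕ)} (h : IsSpecial D) : CrossClosed D := by
  obtain ⟨ν, -, -, hν, σ, τ, -, -, rfl⟩ := h
  exact (crossClosed_youngD hν).image_prodMap σ τ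

section Special

variable {D : Finset (ℕ × ℕ)} {r c : ℕ}

lemma rowCount_le_of_image_snd (hcols : D.image Prod.snd = Icc 1 c) (i : ℕ) :
    rowCount D i ≤ c := by
  simpa using rowCount_le_card_of_forall (S := Icc 1 c) fun j hj =>
    hcols ▸ mem_image_of_mem Prod.snd hj

/-- With the columns listed by decreasing length as `τ 1, …, τ c`, every row is an initial segment
of this list, because columns are nested too. -/
lemma CrossClosed.mem_iff_le_rowCount (h : CrossClosed D) (hcols : D.image Prod.snd = Icc 1 c)
    {τ : Equiv.Perm ℕ} (hτ : ∀ b, τ b ∈ Icc 1 c ↔ b ∈ Icc 1 c)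
    (hτsort : ∀ a ∈ Icc 1 c, ∀ b ∈ Icc 1 c, a ≤ b → colCount D (τ b) ≤ colCount D (τ a))
    (i : ℕ) {b : ℕ} (hb : b ∈ Icc 1 c) : (i, τ b) ∈ D ↔ b ≤ rowCount D i := by
  set P := {b ∈ Icc 1 c | (i, τ b) ∈ D}
  have hcard : #P = rowCount D i := by
    refine card_nbij' (fun b => (i, τ b)) (fun p => τ.symm p.2) (fun b hb => ?_) (fun p hp => ?_)
      (fun b _ => by simp) (fun p hp => ?_)
    · exact mem_filter.2 ⟨(mem_filter.1 hb).2, rfl⟩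
    · obtain ⟨hpD, rfl⟩ := mem_filter.1 hp
      refine mem_filter.2 ⟨(hτ _).1 ?_, by simpa using hpD⟩
      simpa [← hcols] using mem_image_of_mem Prod.snd hpD
    · obtain ⟨-, rfl⟩ := mem_filter.1 hp
      simp
  have hcolNested := h.diagTranspose.rowsNested
  have hP : P = Icc 1 #P := eq_Icc_one_card (by simp [P]) fun b hb a ha hab => by
    simp only [P, mem_filter, mem_Icc] at hb ⊢
    have hac : a ∈ Icc 1 c := mem_Icc.2 ⟨ha, hab.trans hb.1.2⟩
    refine ⟨mem_Icc.1 hac, ?_⟩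
    have := hcolNested (τ b) (τ a) i
    simp only [rowCount_diagTranspose, mem_diagTranspose] at this
    exact this (hτsort a hac b (mem_Icc.2 hb.1) hab) hb.2
  calc (i, τ b) ∈ D ↔ b ∈ P := by simp [P, hb]
    _ ↔ b ∈ Icc 1 #P := by rw [← hP]
    _ ↔ b ≤ rowCount D i := by simp [hcard, (mem_Icc.1 hb).1]

lemma CrossClosed.rowCount_eq_of_forall_le (h : CrossClosed D)
    (hcols : D.image Prod.snd = Icc 1 c) {i : ℕ}
    (hi : ∀ i' ∈ D.image Prod.fst, rowCount D i' ≤ rowCount D i) : rowCount D i = c := by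
  refine le_antisymm (rowCount_le_of_image_snd hcols i) ?_
  have hrow : ∀ j ∈ Icc 1 c, (i, j) ∈ D := fun j hj => by
    obtain ⟨q, hq, rfl⟩ := mem_image.1 (hcols ▸ hj)
    exact h.rowsNested _ _ _ (hi _ (mem_image_of_mem Prod.fst hq)) hq
  calc c = #(Icc 1 c) := by simp
    _ ≤ rowCount D i := card_le_card_of_injOn (fun j => (i, j))
      (fun j hj => mem_filter.2 ⟨hrow j hj, rfl⟩) fun _ _ _ _ hjj => congrArg Prod.snd hjj

lemma eq_image_youngD (hrows : D.image Prod.fst = Icc 1 r) (hcols : D.image Prod.snd = Icc 1 c)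
    {σ τ : Equiv.Perm ℕ} (hσ : ∀ a, σ a ∈ Icc 1 r ↔ a ∈ Icc 1 r)
    (hτ : ∀ b, τ b ∈ Icc 1 c ↔ b ∈ Icc 1 c) {ν : List ℕ} (hlen : ν.length = r)
    (hνc : ∀ a ∈ Icc 1 r, ν.getD (a - 1) 0 ≤ c)
    (hmem : ∀ a ∈ Icc 1 r, ∀ b ∈ Icc 1 c, (σ a, τ b) ∈ D ↔ b ≤ ν.getD (a - 1) 0) :
    D = (youngD ν).image fun p => (σ p.1, τ p.2) := by
  ext ⟨i, j⟩
  simp only [mem_image, Prod.exists, Prod.mk.injEq, mem_youngD, hlen]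
  constructor
  · intro hij
    have hi : σ.symm i ∈ Icc 1 r :=
      (hσ _).1 (by simpa using (hrows ▸ mem_image_of_mem Prod.fst hij : i ∈ Icc 1 r))
    have hj : τ.symm j ∈ Icc 1 c :=
      (hτ _).1 (by simpa using (hcols ▸ mem_image_of_mem Prod.snd hij : j ∈ Icc 1 c))
    refine ⟨σ.symm i, τ.symm j, ⟨(mem_Icc.1 hi).1, (mem_Icc.1 hi).2, (mem_Icc.1 hj).1, ?_⟩,
      by simp, by simp⟩
    rwa [← hmem _ hi _ hj, Equiv.apply_symm_apply, Equiv.apply_symm_apply]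
  · rintro ⟨a, b, ⟨ha1, har, hb1, hb⟩, rfl, rfl⟩
    have ha : a ∈ Icc 1 r := mem_Icc.2 ⟨ha1, har⟩
    exact (hmem a ha b (mem_Icc.2 ⟨hb1, hb.trans (hνc a ha)⟩)).2 hb

theorem CrossClosed.isSpecial (h : CrossClosed D) (hne : D.Nonempty)
    (hrows : D.image Prod.fst = Icc 1 r) (hcols : D.image Prod.snd = Icc 1 c) : IsSpecial D := by
  obtain ⟨σ, hσ, hσsort⟩ := exists_perm_antitoneOn (Icc 1 r) (rowCount D)
  obtain ⟨τ, hτ, hτsort⟩ := exists_perm_antitoneOn (Icc 1 c) (colCount D)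
  obtain ⟨p, hp⟩ := hne
  have hr : 1 ≤ r := by
    have : p.1 ∈ Icc 1 r := hrows ▸ mem_image_of_mem Prod.fst hp
    simp only [mem_Icc] at this
    omega
  have hr1 : 1 ∈ Icc 1 r := mem_Icc.2 ⟨le_rfl, hr⟩
  set ν := (List.range r).map fun a => rowCount D (σ (a + 1))
  have hlen : ν.length = r := by simp [ν]
  have hget : ∀ a ∈ Icc 1 r, ν.getD (a - 1) 0 = rowCount D (σ a) := fun a ha => by
    obtain ⟨ha1, har⟩ := mem_Icc.1 ha
    rw [List.getD_eq_getElem _ _ (by omega)]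
    simp [ν, Nat.sub_add_cancel ha1]
  have hhead : ν.headI = c := by
    rw [← List.getI_zero_eq_headI, List.getI_eq_getElem _ (by omega)]
    simp only [ν, List.getElem_map, List.getElem_range, zero_add]
    refine h.rowCount_eq_of_forall_le hcols fun i hi => ?_
    have ha : σ.symm i ∈ Icc 1 r := (hσ _).1 (by simpa [hrows] using hi)
    simpa using hσsort 1 hr1 _ ha (mem_Icc.1 ha).1
  have hνc : ∀ a ∈ Icc 1 r, ν.getD (a - 1) 0 ≤ c := fun a ha =>
    hget a ha ▸ rowCount_le_of_image_snd hcols _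
  have hmem : ∀ a ∈ Icc 1 r, ∀ b ∈ Icc 1 c, (σ a, τ b) ∈ D ↔ b ≤ ν.getD (a - 1) 0 :=
    fun a ha b hb => hget a ha ▸ h.mem_iff_le_rowCount hcols hτ hτsort _ hb
  refine ⟨ν, List.ne_nil_of_length_pos (by omega), fun x hx => ?_, ?_, σ, τ,
    hlen ▸ fun i hi => (hσ i).2 hi, hhead ▸ fun j hj => (hτ j).2 hj,
    eq_image_youngD hrows hcols hσ hτ hlen hνc hmem⟩
  · obtain ⟨a, ha, rfl⟩ := List.mem_map.1 hx
    have ha : a + 1 ∈ Icc 1 r := mem_Icc.2 ⟨by omega, List.mem_range.1 ha⟩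
    exact rowCount_pos_iff.2 (hrows ▸ (hσ _).2 ha)
  · rw [List.pairwise_iff_getElem]
    intro a b ha hb hab
    simp only [ν, List.getElem_map, List.getElem_range]
    simp only [hlen] at ha hb
    exact hσsort _ (mem_Icc.2 ⟨by omega, by omega⟩) _ (mem_Icc.2 ⟨by omega, by omega⟩) (by omega)

end Special

/-- Result 2.2 (Proposition 3.1 of [MPa15]): a diagram `D` (nonempty, with rows
and columns indexed consecutively from 1) is special iff for every pair of nodes
`(i,j), (i',j')` of `D` with `i ≠ i'`, `j ≠ j'`, at least one of `(i',j)`,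
`(i,j')` is a node of `D`; and this holds iff `λ_D'' = μ_D'`. -/
theorem stmt_17 (D : Finset (ℕ × ℕ)) (hne : D.Nonempty)
    (hrows : ∃ r : ℕ, D.image Prod.fst = Finset.Icc 1 r)
    (hcols : ∃ c : ℕ, D.image Prod.snd = Finset.Icc 1 c) :
    (IsSpecial D ↔
      (∀ p ∈ D, ∀ q ∈ D, p.1 ≠ q.1 → p.2 ≠ q.2 →
        ((q.1, p.2) ∈ D ∨ (p.1, q.2) ∈ D))) ∧
    ((∀ p ∈ D, ∀ q ∈ D, p.1 ≠ q.1 → p.2 ≠ q.2 →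
        ((q.1, p.2) ∈ D ∨ (p.1, q.2) ∈ D)) ↔
      (∀ i : ℕ, 1 ≤ i → rowConj2 D i = colConj D i)) := by
  obtain ⟨r, hrows⟩ := hrows
  obtain ⟨c, hcols⟩ := hcols
  exact ⟨⟨IsSpecial.crossClosed, fun h => CrossClosed.isSpecial h hne hrows hcols⟩,
    fun h _ => CrossClosed.rowConj2_eq_colConj h,
    fun hC => (rowsNested_of_rowConj2_eq_colConj hC).crossClosed⟩
end
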